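/- arXiv:2605.24167 — 2 statements merged into one kernel-verified Lean document; each statement's English description precedes it below -/
import Mathlib

section
/- Under Assumptions (i) full positivity — P(A_t = a, H_t = h) > 0 for every t ∈ {1,…,τ} and every (a, h) ∈ 𝒜_t × ℋ_t — and (ii) strong sequential randomization — for each t ∈ {1,…,τ}, U_{A,t} is conditionally independent of (U_{L,t+1},…,U_{L,τ}, U_{A,t+1},…,U_{A,τ}, U_Y) given H_t — the counterfactual mean identifies as the g-computation formula: E[Y(Ā^d)] = Σ_{(ā_τ, l̄_τ)} E[Y ∣ A_τ = a_τ^d, H_τ = h_τ^d] · Π_{k=1}^τ P(A_k = a_k, L_k = l_k ∣ A_{k−1} = a_{k−1}^d, H_{k−1} = h_{k−1}^d), where the sum is over all (ā_τ, l̄_τ) ∈ 𝒜_1×⋯×𝒜_τ×ℒ_1×⋯×ℒ_τ, the intervened values are defined recursively by h_t^d = (l_1, a_1^d, …, a_{t−1}^d, l_t) and a_t^d = d_t(ā_t, h_t^d), the k = 1 factor is P(A_1 = a_1, L_1 = l_1), and conditional probabilities and expectations are well defined by positivity. -/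
open MeasureTheory Finset

namespace GLMTP

variable {τ : ℕ}

/-- Augmented natural-treatment history: one treatment value for each time index `< tp`. -/
abbrev SbarN (𝓐 : Fin τ → Type) (tp : ℕ) : Type :=
  ∀ s : {s : Fin τ // s.val < tp}, 𝓐 s.1

/-- Observed history `H_t = (L_1, A_1, …, A_{t-1}, L_t)`. -/
abbrev Hist (𝓐 𝓛 : Fin τ → Type) (t : Fin τ) : Type :=
  (∀ s : {s : Fin τ // s ≤ t}, 𝓛 s.1) × (∀ s : {s : Fin τ // s < t}, 𝓐 s.1)

/-- A generalized longitudinal modified treatment policy. -/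
abbrev Policy (𝓐 𝓛 : Fin τ → Type) : Type :=
  ∀ t : Fin τ, SbarN 𝓐 (t.val + 1) → Hist 𝓐 𝓛 t → 𝓐 t

variable {𝓐 𝓛 : Fin τ → Type}

/-- The observed data structure with its law `μ`. -/
structure Model (𝓐 𝓛 : Fin τ → Type) (Ω : Type) [MeasurableSpace Ω] where
  μ : Measure Ω
  L : ∀ t : Fin τ, Ω → 𝓛 t
  A : ∀ t : Fin τ, Ω → 𝓐 t
  Y : Ω → ℝ

variable {Ω : Type} [MeasurableSpace Ω]

def Model.Hproc (M : Model 𝓐 𝓛 Ω) (t : Fin τ) (ω : Ω) : Hist 𝓐 𝓛 t :=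
  (fun s => M.L s.1 ω, fun s => M.A s.1 ω)

def Model.histEvent (M : Model 𝓐 𝓛 Ω) (t : Fin τ) (h : Hist 𝓐 𝓛 t) : Set Ω :=
  {ω | M.Hproc t ω = h}

def Model.condEvent (M : Model 𝓐 𝓛 Ω) (t : Fin τ) (a : 𝓐 t) (h : Hist 𝓐 𝓛 t) : Set Ω :=
  {ω | M.A t ω = a} ∩ M.histEvent t h

/-- Conditional expectation given an event, defined as a ratio (well defined under
positivity). -/
noncomputable def condExpOn (μ : Measure Ω) (S : Set Ω) (X : Ω → ℝ) : ℝ :=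
  (∫ ω in S, X ω ∂μ) / (μ S).toReal

/-- Full positivity: `P(A_t = a, H_t = h) > 0` for every `t` and `(a, h) ∈ 𝒜_t × ℋ_t`. -/
def Model.Positivity (M : Model 𝓐 𝓛 Ω) : Prop :=
  ∀ (t : Fin τ) (a : 𝓐 t) (h : Hist 𝓐 𝓛 t), 0 < M.μ (M.condEvent t a h)

/-- Measurability of the observed variables. -/
def Model.Meas (M : Model 𝓐 𝓛 Ω) : Prop :=
  (∀ (t : Fin τ) (a : 𝓐 t), MeasurableSet {ω | M.A t ω = a}) ∧
  (∀ (t : Fin τ) (l : 𝓛 t), MeasurableSet {ω | M.L t ω = l}) ∧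
  Measurable M.Y

/-- The intervened values `a_t^d = d_t(ā_t, h_t^d)` defined recursively from a full
natural-treatment trajectory `ā` and a covariate trajectory `l̄`, where
`h_t^d = (l_1, a_1^d, …, a_{t-1}^d, l_t)`. -/
def adSeq (d : Policy 𝓐 𝓛) (abar : ∀ s : Fin τ, 𝓐 s) (lbar : ∀ s : Fin τ, 𝓛 s)
    (t : Fin τ) : 𝓐 t :=
  d t (fun s => abar s.1) (fun s => lbar s.1, fun s => adSeq d abar lbar s.1)
termination_by t.val
decreasing_by exact s.2

/-- The g-computation formula
`Σ_{(ā_τ, l̄_τ)} E[Y ∣ A_τ = a_τ^d, H_τ = h_τ^d] Π_{k=1}^τ P(A_k = a_k, L_k = l_k ∣ A_{k-1} = a_{k-1}^d, H_{k-1} = h_{k-1}^d)`,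
with the `k = 1` factor being `P(A_1 = a_1, L_1 = l_1)` (at `k = 1` the conditioning event
is the whole space, which has probability one). -/
noncomputable def gcomp [∀ t, Fintype (𝓐 t)] [∀ t, Fintype (𝓛 t)]
    (M : Model 𝓐 𝓛 Ω) (d : Policy 𝓐 𝓛) : ℝ :=
  ∑ abar : ∀ s : Fin τ, 𝓐 s, ∑ lbar : ∀ s : Fin τ, 𝓛 s,
    condExpOn M.μ
      {ω | (∀ s : Fin τ, M.L s ω = lbar s) ∧ (∀ s : Fin τ, M.A s ω = adSeq d abar lbar s)}
      M.Y *
    ∏ k : Fin τ,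
      (M.μ {ω | (∀ s : Fin τ, s < k → (M.L s ω = lbar s ∧ M.A s ω = adSeq d abar lbar s)) ∧
            M.A k ω = abar k ∧ M.L k ω = lbar k}).toReal /
      (M.μ {ω | ∀ s : Fin τ, s < k →
            (M.L s ω = lbar s ∧ M.A s ω = adSeq d abar lbar s)}).toReal

/-- The bundle of exogenous errors strictly after time `t` (together with `U_Y`):
`(U_{L,t+1}, …, U_{L,τ}, U_{A,t+1}, …, U_{A,τ}, U_Y)`. -/
abbrev FutT (UL UA : Fin τ → Type) (UY : Type) (t : Fin τ) : Type :=
  (∀ s : {s : Fin τ // t < s}, UL s.1) × (∀ s : {s : Fin τ // t < s}, UA s.1) × UY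

section AuxGeneral

lemma aux_enn_cancel {a b c : ENNReal} (h0 : a ≠ 0) (ht : a ≠ ⊤) (h : a * b = a * c) :
    b = c := by
  have := congrArg (a⁻¹ * ·) h
  simpa [← mul_assoc, ENNReal.inv_mul_cancel h0 ht] using this

lemma aux_meas_of_countable {α β : Type*} [MeasurableSpace α] [MeasurableSpace β]
    [Countable α] [MeasurableSingletonClass α] (f : α → β) : Measurable f :=
  fun _ _ => (Set.to_countable _).measurableSet

lemma aux_int {α UY : Type*} [MeasurableSpace α] [MeasurableSpace UY]
    (μ : MeasureTheory.Measure α) (V : α → UY) (hV : Measurable V)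
    (g : UY → ℝ) (hg : Measurable g) (s t : Set α) (c₁ c₂ : ENNReal)
    (h : ∀ S : Set UY, MeasurableSet S → μ (s ∩ V ⁻¹' S) * c₁ = c₂ * μ (t ∩ V ⁻¹' S)) :
    c₁.toReal * ∫ ω in s, g (V ω) ∂μ = c₂.toReal * ∫ ω in t, g (V ω) ∂μ := by
  have hmap : MeasureTheory.Measure.map V (c₁ • μ.restrict s) =
      MeasureTheory.Measure.map V (c₂ • μ.restrict t) := by
    ext S hS
    rw [MeasureTheory.Measure.map_apply hV hS, MeasureTheory.Measure.map_apply hV hS]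
    simp only [MeasureTheory.Measure.smul_apply, smul_eq_mul,
      MeasureTheory.Measure.restrict_apply (hV hS)]
    rw [Set.inter_comm (V ⁻¹' S) s, Set.inter_comm (V ⁻¹' S) t, mul_comm c₁]
    exact h S hS
  have h1 : ∫ u, g u ∂(MeasureTheory.Measure.map V (c₁ • μ.restrict s)) =
      c₁.toReal * ∫ ω in s, g (V ω) ∂μ := by
    rw [MeasureTheory.integral_map hV.aemeasurable hg.aestronglyMeasurable,
      MeasureTheory.integral_smul_measure]
    simp
  have h2 : ∫ u, g u ∂(MeasureTheory.Measure.map V (c₂ • μ.restrict t)) =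
      c₂.toReal * ∫ ω in t, g (V ω) ∂μ := by
    rw [MeasureTheory.integral_map hV.aemeasurable hg.aestronglyMeasurable,
      MeasureTheory.integral_smul_measure]
    simp
  rw [← h1, ← h2, hmap]

end AuxGeneral
section AuxSets



/-- Observed-history event with a `ℕ` cutoff. -/
def OevN (M : Model 𝓐 𝓛 Ω) (d : Policy 𝓐 𝓛) (abar : ∀ s : Fin τ, 𝓐 s)
    (lbar : ∀ s : Fin τ, 𝓛 s) (n : ℕ) : Set Ω :=
  {ω | ∀ s : Fin τ, s.val < n → (M.L s ω = lbar s ∧ M.A s ω = adSeq d abar lbar s)}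

/-- Counterfactual-history event with a `ℕ` cutoff. -/
def EcfN (Ld : ∀ t : Fin τ, Ω → 𝓛 t) (Anat : ∀ t : Fin τ, Ω → 𝓐 t)
    (abar : ∀ s : Fin τ, 𝓐 s) (lbar : ∀ s : Fin τ, 𝓛 s) (n : ℕ) : Set Ω :=
  {ω | ∀ s : Fin τ, s.val < n → (Ld s ω = lbar s ∧ Anat s ω = abar s)}

/-- The intervened history value `h_t^d`. -/
def hDv (d : Policy 𝓐 𝓛) (abar : ∀ s : Fin τ, 𝓐 s) (lbar : ∀ s : Fin τ, 𝓛 s)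
    (t : Fin τ) : Hist 𝓐 𝓛 t :=
  (fun s => lbar s.1, fun s => adSeq d abar lbar s.1)

/-- The numerator event `{A_t = abar_t, H_t = h_t^d}`. -/
def NevD (M : Model 𝓐 𝓛 Ω) (d : Policy 𝓐 𝓛) (abar : ∀ s : Fin τ, 𝓐 s)
    (lbar : ∀ s : Fin τ, 𝓛 s) (t : Fin τ) : Set Ω :=
  {ω | M.A t ω = abar t} ∩ M.histEvent t (hDv d abar lbar t)

variable {M : Model 𝓐 𝓛 Ω} {d : Policy 𝓐 𝓛} {abar : ∀ s : Fin τ, 𝓐 s}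
  {lbar : ∀ s : Fin τ, 𝓛 s}

lemma mem_histEvent_iff {t : Fin τ} {ω : Ω} :
    ω ∈ M.histEvent t (hDv d abar lbar t) ↔
      (∀ s : Fin τ, s.val ≤ t.val → M.L s ω = lbar s) ∧
      (∀ s : Fin τ, s.val < t.val → M.A s ω = adSeq d abar lbar s) := by
  simp only [Model.histEvent, Model.Hproc, hDv, Set.mem_setOf_eq, Prod.ext_iff,
    funext_iff, Subtype.forall, Fin.le_def, Fin.lt_def]

lemma OevN_succ (t : Fin τ) :
    OevN M d abar lbar (t.val + 1) =
      {ω | M.A t ω = adSeq d abar lbar t} ∩ M.histEvent t (hDv d abar lbar t) := by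
  ext ω
  simp only [OevN, Set.mem_setOf_eq, Set.mem_inter_iff, mem_histEvent_iff]
  constructor
  · intro hω
    exact ⟨(hω t (by omega)).2, fun s hs => (hω s (by omega)).1,
      fun s hs => (hω s (by omega)).2⟩
  · rintro ⟨hA, hL, hA'⟩ s hs
    refine ⟨hL s (by omega), ?_⟩
    rcases Nat.lt_or_ge s.val t.val with h | h
    · exact hA' s h
    · have : s = t := Fin.ext (by omega)
      subst this; exact hA

lemma NevD_eq (t : Fin τ) :
    NevD M d abar lbar t =
      {ω | (∀ s : Fin τ, s < t → (M.L s ω = lbar s ∧ M.A s ω = adSeq d abar lbar s)) ∧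
        M.A t ω = abar t ∧ M.L t ω = lbar t} := by
  ext ω
  simp only [NevD, Set.mem_inter_iff, Set.mem_setOf_eq, mem_histEvent_iff, Fin.lt_def]
  constructor
  · rintro ⟨hA, hL, hA'⟩
    exact ⟨fun s hs => ⟨hL s (by omega), hA' s hs⟩, hA, hL t (by omega)⟩
  · rintro ⟨hs, hA, hLt⟩
    refine ⟨hA, fun s hs' => ?_, fun s hs' => (hs s hs').2⟩
    rcases Nat.lt_or_ge s.val t.val with h | h
    · exact (hs s h).1
    · have : s = t := Fin.ext (by omega)
      subst this; exact hLt

lemma OevN_fin (k : Fin τ) :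
    {ω | ∀ s : Fin τ, s < k → (M.L s ω = lbar s ∧ M.A s ω = adSeq d abar lbar s)} =
      OevN M d abar lbar k.val := by
  ext ω; simp only [OevN, Set.mem_setOf_eq, Fin.lt_def]

lemma OevN_top :
    {ω | (∀ s : Fin τ, M.L s ω = lbar s) ∧ (∀ s : Fin τ, M.A s ω = adSeq d abar lbar s)} =
      OevN M d abar lbar τ := by
  ext ω
  simp only [OevN, Set.mem_setOf_eq]
  exact ⟨fun h s _ => ⟨h.1 s, h.2 s⟩, fun h => ⟨fun s => (h s s.isLt).1, fun s => (h s s.isLt).2⟩⟩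

lemma mem_EcfN {Ld : ∀ t : Fin τ, Ω → 𝓛 t} {Anat : ∀ t : Fin τ, Ω → 𝓐 t} {n : ℕ} {ω : Ω} :
    ω ∈ EcfN Ld Anat abar lbar n ↔
      ∀ s : Fin τ, s.val < n → (Ld s ω = lbar s ∧ Anat s ω = abar s) := Iff.rfl

lemma mem_OevN {n : ℕ} {ω : Ω} :
    ω ∈ OevN M d abar lbar n ↔
      ∀ s : Fin τ, s.val < n → (M.L s ω = lbar s ∧ M.A s ω = adSeq d abar lbar s) := Iff.rfl

lemma OevN_zero : OevN M d abar lbar 0 = Set.univ := by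
  ext ω; simp [OevN]

lemma OevN_subset (n : ℕ) : OevN M d abar lbar τ ⊆ OevN M d abar lbar n :=
  fun ω hω s _ => hω s s.isLt

lemma OevN_measurable (hmeas : M.Meas) (n : ℕ) : MeasurableSet (OevN M d abar lbar n) := by
  have : OevN M d abar lbar n =
      ⋂ s : Fin τ, ⋂ _ : s.val < n, ({ω | M.L s ω = lbar s} ∩ {ω | M.A s ω = adSeq d abar lbar s}) := by
    ext ω; simp [OevN, forall_and]
  rw [this]
  exact MeasurableSet.iInter fun s => MeasurableSet.iInter fun _ =>
    (hmeas.2.1 s (lbar s)).inter (hmeas.1 s _)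

end AuxSets
section AuxStruct

set_option linter.unusedSectionVars false

variable {UL UA : Fin τ → Type} {UY : Type}
  {M : Model 𝓐 𝓛 Ω} {d : Policy 𝓐 𝓛}
  {ULv : ∀ t : Fin τ, Ω → UL t} {UAv : ∀ t : Fin τ, Ω → UA t} {UYv : Ω → UY}
  {fL : ∀ t : Fin τ, (∀ s : {s : Fin τ // s < t}, 𝓛 s.1) →
      (∀ s : {s : Fin τ // s < t}, 𝓐 s.1) → UL t → 𝓛 t}
  {fA : ∀ t : Fin τ, Hist 𝓐 𝓛 t → UA t → 𝓐 t}
  {Ld : ∀ t : Fin τ, Ω → 𝓛 t} {Ad : ∀ t : Fin τ, Ω → 𝓐 t}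
  {Anat : ∀ t : Fin τ, Ω → 𝓐 t}
  {abar : ∀ s : Fin τ, 𝓐 s} {lbar : ∀ s : Fin τ, 𝓛 s}

/-- On the counterfactual-history event, the intervened treatments take the
deterministic values `adSeq`. -/
lemma adConsist
    (hAd : ∀ (t : Fin τ) (ω : Ω),
      Ad t ω = d t (fun s => Anat s.1 ω) (fun s => Ld s.1 ω, fun s => Ad s.1 ω))
    {ω : Ω} {n : ℕ} (hω : ω ∈ EcfN Ld Anat abar lbar n) :
    ∀ t : Fin τ, t.val < n → Ad t ω = adSeq d abar lbar t := by
  have main : ∀ m : ℕ, ∀ t : Fin τ, t.val ≤ m → t.val < n → Ad t ω = adSeq d abar lbar t := by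
    intro m
    induction m with
    | zero =>
      intro t ht htn
      rw [hAd t ω, adSeq]
      have h1 : (fun s : {s : Fin τ // s.val < t.val + 1} => Anat s.1 ω) =
          fun (s : {s : Fin τ // s.val < t.val + 1}) => abar s.1 := by
        funext s; exact (hω s.1 (by have := s.2; omega)).2
      have h2 : (fun s : {s : Fin τ // s ≤ t} => Ld s.1 ω) = fun (s : {s : Fin τ // s ≤ t}) => lbar s.1 := by
        funext s; exact (hω s.1 (by have := Fin.le_def.mp s.2; omega)).1
      have h3 : (fun s : {s : Fin τ // s < t} => Ad s.1 ω) =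
          fun (s : {s : Fin τ // s < t}) => adSeq d abar lbar s.1 := by
        funext s; exact absurd (Fin.lt_def.mp s.2) (by omega)
      rw [h1, h2, h3]
    | succ m IH =>
      intro t ht htn
      rw [hAd t ω, adSeq]
      have h1 : (fun s : {s : Fin τ // s.val < t.val + 1} => Anat s.1 ω) =
          fun (s : {s : Fin τ // s.val < t.val + 1}) => abar s.1 := by
        funext s; exact (hω s.1 (by have := s.2; omega)).2
      have h2 : (fun s : {s : Fin τ // s ≤ t} => Ld s.1 ω) = fun (s : {s : Fin τ // s ≤ t}) => lbar s.1 := by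
        funext s; exact (hω s.1 (by have := Fin.le_def.mp s.2; omega)).1
      have h3 : (fun s : {s : Fin τ // s < t} => Ad s.1 ω) =
          fun (s : {s : Fin τ // s < t}) => adSeq d abar lbar s.1 := by
        funext s; exact IH s.1 (by have := Fin.lt_def.mp s.2; omega)
          (by have := Fin.lt_def.mp s.2; omega)
      rw [h1, h2, h3]
  exact fun t => main t.val t le_rfl

/-- On the counterfactual-history event, `L_t^d` is a fixed function of `U_{L,t}`. -/
lemma Ld_det
    (hLd : ∀ (t : Fin τ) (ω : Ω),
      Ld t ω = fL t (fun s => Ld s.1 ω) (fun s => Ad s.1 ω) (ULv t ω))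
    (hAd : ∀ (t : Fin τ) (ω : Ω),
      Ad t ω = d t (fun s => Anat s.1 ω) (fun s => Ld s.1 ω, fun s => Ad s.1 ω))
    {ω : Ω} {t : Fin τ} (hω : ω ∈ EcfN Ld Anat abar lbar t.val) :
    Ld t ω = fL t (fun s => lbar s.1) (fun s => adSeq d abar lbar s.1) (ULv t ω) := by
  rw [hLd t ω]
  have h2 : (fun s : {s : Fin τ // s < t} => Ld s.1 ω) = fun (s : {s : Fin τ // s < t}) => lbar s.1 := by
    funext s; exact (hω s.1 (Fin.lt_def.mp s.2)).1
  have h3 : (fun s : {s : Fin τ // s < t} => Ad s.1 ω) =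
      fun (s : {s : Fin τ // s < t}) => adSeq d abar lbar s.1 := by
    funext s; exact adConsist hAd hω s.1 (Fin.lt_def.mp s.2)
  rw [h2, h3]

/-- On the observed-history event, `L_t` is the same fixed function of `U_{L,t}`. -/
lemma L_det
    (hLeq : ∀ (t : Fin τ) (ω : Ω),
      M.L t ω = fL t (fun s => M.L s.1 ω) (fun s => M.A s.1 ω) (ULv t ω))
    {ω : Ω} {t : Fin τ} (hω : ω ∈ OevN M d abar lbar t.val) :
    M.L t ω = fL t (fun s => lbar s.1) (fun s => adSeq d abar lbar s.1) (ULv t ω) := by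
  rw [hLeq t ω]
  have h2 : (fun s : {s : Fin τ // s < t} => M.L s.1 ω) = fun (s : {s : Fin τ // s < t}) => lbar s.1 := by
    funext s; exact (hω s.1 (Fin.lt_def.mp s.2)).1
  have h3 : (fun s : {s : Fin τ // s < t} => M.A s.1 ω) =
      fun (s : {s : Fin τ // s < t}) => adSeq d abar lbar s.1 := by
    funext s; exact (hω s.1 (Fin.lt_def.mp s.2)).2
  rw [h2, h3]

/-- On the counterfactual-history event together with `L_t^d = l_t`, the natural treatment
value `A_t^{nat}` is a fixed function of `U_{A,t}`. -/
lemma Anat_det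
    (hAnat : ∀ (t : Fin τ) (ω : Ω),
      Anat t ω = fA t (fun s => Ld s.1 ω, fun s => Ad s.1 ω) (UAv t ω))
    (hAd : ∀ (t : Fin τ) (ω : Ω),
      Ad t ω = d t (fun s => Anat s.1 ω) (fun s => Ld s.1 ω, fun s => Ad s.1 ω))
    {ω : Ω} {t : Fin τ} (hω : ω ∈ EcfN Ld Anat abar lbar t.val) (hLt : Ld t ω = lbar t) :
    Anat t ω = fA t (hDv d abar lbar t) (UAv t ω) := by
  rw [hAnat t ω]
  have h2 : (fun s : {s : Fin τ // s ≤ t} => Ld s.1 ω) = fun (s : {s : Fin τ // s ≤ t}) => lbar s.1 := by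
    funext s
    rcases Nat.lt_or_ge s.1.val t.val with h | h
    · exact (hω s.1 h).1
    · have : s.1 = t := Fin.ext (by have := Fin.le_def.mp s.2; omega)
      rw [this, hLt]
  have h3 : (fun s : {s : Fin τ // s < t} => Ad s.1 ω) =
      fun (s : {s : Fin τ // s < t}) => adSeq d abar lbar s.1 := by
    funext s; exact adConsist hAd hω s.1 (Fin.lt_def.mp s.2)
  rw [hDv, h2, h3]

/-- On the observed-history event `H_t = h_t^d`, the observed treatment `A_t` is the same
fixed function of `U_{A,t}`. -/
lemma A_det
    (hAeq : ∀ (t : Fin τ) (ω : Ω), M.A t ω = fA t (M.Hproc t ω) (UAv t ω))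
    {ω : Ω} {t : Fin τ} (hω : ω ∈ M.histEvent t (hDv d abar lbar t)) :
    M.A t ω = fA t (hDv d abar lbar t) (UAv t ω) := by
  rw [hAeq t ω, hω]

end AuxStruct
section AuxKey

set_option linter.unusedSectionVars false

/-- The bundle of future exogenous errors as a process. -/
def futm {UL UA : Fin τ → Type} {UY : Type} (ULv : ∀ t : Fin τ, Ω → UL t)
    (UAv : ∀ t : Fin τ, Ω → UA t) (UYv : Ω → UY) (t : Fin τ) (ω : Ω) :
    FutT UL UA UY t :=
  (fun s => ULv s.1 ω, fun s => UAv s.1 ω, UYv ω)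

variable [∀ t, Nonempty (𝓐 t)]
    [∀ t, MeasurableSpace (𝓐 t)] [∀ t, DiscreteMeasurableSpace (𝓐 t)]
    [∀ t, MeasurableSpace (𝓛 t)] [∀ t, DiscreteMeasurableSpace (𝓛 t)]
    {UL UA : Fin τ → Type} {UY : Type}
    [∀ t, MeasurableSpace (UL t)] [∀ t, MeasurableSpace (UA t)] [MeasurableSpace UY]


lemma key_swap
    (M : Model 𝓐 𝓛 Ω) [IsProbabilityMeasure M.μ]
    (ULv : ∀ t : Fin τ, Ω → UL t) (UAv : ∀ t : Fin τ, Ω → UA t) (UYv : Ω → UY)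
    (fA : ∀ t : Fin τ, Hist 𝓐 𝓛 t → UA t → 𝓐 t)
    (hfA : ∀ t, Measurable (fun p : Hist 𝓐 𝓛 t × UA t => fA t p.1 p.2))
    (hAeq : ∀ (t : Fin τ) (ω : Ω), M.A t ω = fA t (M.Hproc t ω) (UAv t ω))
    (d : Policy 𝓐 𝓛)
    (hpos : M.Positivity)
    (hrand : ∀ (t : Fin τ) (B : Set (UA t)) (C : Set (FutT UL UA UY t)),
      MeasurableSet B → MeasurableSet C → ∀ h : Hist 𝓐 𝓛 t,
        M.μ ({ω | UAv t ω ∈ B} ∩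
            {ω | (⟨fun s => ULv s.1 ω, fun s => UAv s.1 ω, UYv ω⟩ : FutT UL UA UY t) ∈ C} ∩
            M.histEvent t h) *
          M.μ (M.histEvent t h) =
        M.μ ({ω | UAv t ω ∈ B} ∩ M.histEvent t h) *
          M.μ ({ω | (⟨fun s => ULv s.1 ω, fun s => UAv s.1 ω, UYv ω⟩ :
              FutT UL UA UY t) ∈ C} ∩ M.histEvent t h))
    (abar : ∀ s : Fin τ, 𝓐 s) (lbar : ∀ s : Fin τ, 𝓛 s)
    (t : Fin τ) (D' : Set (FutT UL UA UY t)) (hD' : MeasurableSet D') :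
    M.μ (NevD M d abar lbar t ∩ futm ULv UAv UYv t ⁻¹' D') *
        M.μ (OevN M d abar lbar (t.val + 1)) =
      M.μ (NevD M d abar lbar t) *
        M.μ (OevN M d abar lbar (t.val + 1) ∩ futm ULv UAv UYv t ⁻¹' D') := by
  have hrand' : ∀ (B : Set (UA t)), MeasurableSet B →
      M.μ (UAv t ⁻¹' B ∩ futm ULv UAv UYv t ⁻¹' D' ∩
          M.histEvent t (hDv d abar lbar t)) *
        M.μ (M.histEvent t (hDv d abar lbar t)) =
      M.μ (UAv t ⁻¹' B ∩ M.histEvent t (hDv d abar lbar t)) *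
        M.μ (futm ULv UAv UYv t ⁻¹' D' ∩ M.histEvent t (hDv d abar lbar t)) :=
    fun B hB => hrand t B D' hB hD' (hDv d abar lbar t)
  have hHne : M.μ (M.histEvent t (hDv d abar lbar t)) ≠ 0 := by
    refine ne_of_gt (lt_of_lt_of_le
      (hpos t (Classical.arbitrary (𝓐 t)) (hDv d abar lbar t)) ?_)
    exact measure_mono Set.inter_subset_right
  set BAa : Set (UA t) := {u | fA t (hDv d abar lbar t) u = abar t} with hBAadef
  set BAd : Set (UA t) := {u | fA t (hDv d abar lbar t) u = adSeq d abar lbar t} with hBAddef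
  have hBAa : MeasurableSet BAa := by
    have h1 : Measurable (fun u : UA t => ((hDv d abar lbar t, u) : Hist 𝓐 𝓛 t × UA t)) :=
      measurable_const.prodMk measurable_id
    exact ((hfA t).comp h1) (MeasurableSet.of_discrete (s := {abar t}))
  have hBAd : MeasurableSet BAd := by
    have h1 : Measurable (fun u : UA t => ((hDv d abar lbar t, u) : Hist 𝓐 𝓛 t × UA t)) :=
      measurable_const.prodMk measurable_id
    exact ((hfA t).comp h1) (MeasurableSet.of_discrete (s := {adSeq d abar lbar t}))
  have eA1 : UAv t ⁻¹' BAa ∩ M.histEvent t (hDv d abar lbar t) = NevD M d abar lbar t := by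
    ext ω
    simp only [Set.mem_inter_iff, Set.mem_preimage, hBAadef, Set.mem_setOf_eq, NevD]
    constructor
    · rintro ⟨h1, h2⟩; exact ⟨by rw [A_det hAeq h2]; exact h1, h2⟩
    · rintro ⟨h1, h2⟩; exact ⟨by rw [← A_det hAeq h2]; exact h1, h2⟩
  have eA2 : UAv t ⁻¹' BAd ∩ M.histEvent t (hDv d abar lbar t) =
      OevN M d abar lbar (t.val + 1) := by
    rw [OevN_succ]
    ext ω
    simp only [Set.mem_inter_iff, Set.mem_preimage, hBAddef, Set.mem_setOf_eq]
    constructor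
    · rintro ⟨h1, h2⟩; exact ⟨by rw [A_det hAeq h2]; exact h1, h2⟩
    · rintro ⟨h1, h2⟩; exact ⟨by rw [← A_det hAeq h2]; exact h1, h2⟩
  have hr1 := hrand' BAa hBAa
  have hr2 := hrand' BAd hBAd
  rw [Set.inter_right_comm] at hr1 hr2
  rw [eA1] at hr1
  rw [eA2] at hr2
  apply aux_enn_cancel hHne (measure_ne_top _ _)
  calc M.μ (M.histEvent t (hDv d abar lbar t)) *
        (M.μ (NevD M d abar lbar t ∩ futm ULv UAv UYv t ⁻¹' D') *
          M.μ (OevN M d abar lbar (t.val + 1)))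
      = (M.μ (NevD M d abar lbar t ∩ futm ULv UAv UYv t ⁻¹' D') *
          M.μ (M.histEvent t (hDv d abar lbar t))) *
          M.μ (OevN M d abar lbar (t.val + 1)) := by ring
    _ = (M.μ (NevD M d abar lbar t) *
          M.μ (futm ULv UAv UYv t ⁻¹' D' ∩ M.histEvent t (hDv d abar lbar t))) *
          M.μ (OevN M d abar lbar (t.val + 1)) := by rw [hr1]
    _ = (M.μ (OevN M d abar lbar (t.val + 1)) *
          M.μ (futm ULv UAv UYv t ⁻¹' D' ∩ M.histEvent t (hDv d abar lbar t))) *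
          M.μ (NevD M d abar lbar t) := by ring
    _ = (M.μ (OevN M d abar lbar (t.val + 1) ∩ futm ULv UAv UYv t ⁻¹' D') *
          M.μ (M.histEvent t (hDv d abar lbar t))) *
          M.μ (NevD M d abar lbar t) := by rw [← hr2]
    _ = M.μ (M.histEvent t (hDv d abar lbar t)) *
        (M.μ (NevD M d abar lbar t) *
          M.μ (OevN M d abar lbar (t.val + 1) ∩ futm ULv UAv UYv t ⁻¹' D')) := by ring

lemma key_induction
    (M : Model 𝓐 𝓛 Ω) [IsProbabilityMeasure M.μ]
    (ULv : ∀ t : Fin τ, Ω → UL t) (UAv : ∀ t : Fin τ, Ω → UA t) (UYv : Ω → UY)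
    (fL : ∀ t : Fin τ, (∀ s : {s : Fin τ // s < t}, 𝓛 s.1) →
      (∀ s : {s : Fin τ // s < t}, 𝓐 s.1) → UL t → 𝓛 t)
    (fA : ∀ t : Fin τ, Hist 𝓐 𝓛 t → UA t → 𝓐 t)
    (hfL : ∀ t, Measurable (fun p : (∀ s : {s : Fin τ // s < t}, 𝓛 s.1) ×
      (∀ s : {s : Fin τ // s < t}, 𝓐 s.1) × UL t => fL t p.1 p.2.1 p.2.2))
    (hfA : ∀ t, Measurable (fun p : Hist 𝓐 𝓛 t × UA t => fA t p.1 p.2))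
    (hLeq : ∀ (t : Fin τ) (ω : Ω),
      M.L t ω = fL t (fun s => M.L s.1 ω) (fun s => M.A s.1 ω) (ULv t ω))
    (hAeq : ∀ (t : Fin τ) (ω : Ω), M.A t ω = fA t (M.Hproc t ω) (UAv t ω))
    (d : Policy 𝓐 𝓛)
    (Ld : ∀ t : Fin τ, Ω → 𝓛 t) (Ad : ∀ t : Fin τ, Ω → 𝓐 t)
    (Anat : ∀ t : Fin τ, Ω → 𝓐 t)
    (hLd : ∀ (t : Fin τ) (ω : Ω),
      Ld t ω = fL t (fun s => Ld s.1 ω) (fun s => Ad s.1 ω) (ULv t ω))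
    (hAnat : ∀ (t : Fin τ) (ω : Ω),
      Anat t ω = fA t (fun s => Ld s.1 ω, fun s => Ad s.1 ω) (UAv t ω))
    (hAnat1 : ∀ (t : Fin τ), t.val = 0 → ∀ ω : Ω, Anat t ω = M.A t ω)
    (hAd : ∀ (t : Fin τ) (ω : Ω),
      Ad t ω = d t (fun s => Anat s.1 ω) (fun s => Ld s.1 ω, fun s => Ad s.1 ω))
    (hpos : M.Positivity)
    (hrand : ∀ (t : Fin τ) (B : Set (UA t)) (C : Set (FutT UL UA UY t)),
      MeasurableSet B → MeasurableSet C → ∀ h : Hist 𝓐 𝓛 t,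
        M.μ ({ω | UAv t ω ∈ B} ∩
            {ω | (⟨fun s => ULv s.1 ω, fun s => UAv s.1 ω, UYv ω⟩ : FutT UL UA UY t) ∈ C} ∩
            M.histEvent t h) *
          M.μ (M.histEvent t h) =
        M.μ ({ω | UAv t ω ∈ B} ∩ M.histEvent t h) *
          M.μ ({ω | (⟨fun s => ULv s.1 ω, fun s => UAv s.1 ω, UYv ω⟩ :
              FutT UL UA UY t) ∈ C} ∩ M.histEvent t h))
    (abar : ∀ s : Fin τ, 𝓐 s) (lbar : ∀ s : Fin τ, 𝓛 s) :
    ∀ (n : ℕ) (t : Fin τ), t.val = n → ∀ C : Set (FutT UL UA UY t), MeasurableSet C →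
      M.μ (EcfN Ld Anat abar lbar (t.val + 1) ∩ futm ULv UAv UYv t ⁻¹' C) *
        ∏ k ∈ Finset.Iio t, M.μ (OevN M d abar lbar (k.val + 1)) =
      (∏ k ∈ Finset.Iio t, M.μ (NevD M d abar lbar k)) *
        M.μ (NevD M d abar lbar t ∩ futm ULv UAv UYv t ⁻¹' C) := by
  -- massaged randomization hypothesis
  have hrand' : ∀ (t : Fin τ) (B : Set (UA t)) (C : Set (FutT UL UA UY t)),
      MeasurableSet B → MeasurableSet C →
        M.μ (UAv t ⁻¹' B ∩ futm ULv UAv UYv t ⁻¹' C ∩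
            M.histEvent t (hDv d abar lbar t)) *
          M.μ (M.histEvent t (hDv d abar lbar t)) =
        M.μ (UAv t ⁻¹' B ∩ M.histEvent t (hDv d abar lbar t)) *
          M.μ (futm ULv UAv UYv t ⁻¹' C ∩ M.histEvent t (hDv d abar lbar t)) :=
    fun t B C hB hC => hrand t B C hB hC (hDv d abar lbar t)
  have hHne : ∀ t : Fin τ, M.μ (M.histEvent t (hDv d abar lbar t)) ≠ 0 := by
    intro t
    refine ne_of_gt (lt_of_lt_of_le (hpos t (Classical.arbitrary (𝓐 t)) (hDv d abar lbar t)) ?_)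
    exact measure_mono Set.inter_subset_right
  intro n
  induction n with
  | zero =>
    intro t ht C hC
    have hIio : Finset.Iio t = (∅ : Finset (Fin τ)) := by
      ext k; simp [Finset.mem_Iio, Fin.lt_def, ht]
    have hLd0 : ∀ ω, Ld t ω = M.L t ω := by
      intro ω
      rw [hLd t ω, hLeq t ω]
      have e1 : (fun s : {s : Fin τ // s < t} => Ld s.1 ω) =
          (fun s : {s : Fin τ // s < t} => M.L s.1 ω) := by
        funext s; exact absurd (Fin.lt_def.mp s.2) (by omega)
      have e2 : (fun s : {s : Fin τ // s < t} => Ad s.1 ω) =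
          (fun s : {s : Fin τ // s < t} => M.A s.1 ω) := by
        funext s; exact absurd (Fin.lt_def.mp s.2) (by omega)
      rw [e1, e2]
    have hset : EcfN Ld Anat abar lbar (t.val + 1) = NevD M d abar lbar t := by
      ext ω
      simp only [EcfN, Set.mem_setOf_eq, NevD, Set.mem_inter_iff, mem_histEvent_iff, ht]
      constructor
      · intro h
        obtain ⟨h1, h2⟩ := h t (by omega)
        refine ⟨by rw [← hAnat1 t ht ω]; exact h2, fun s hs => ?_, fun s hs => absurd hs (by omega)⟩
        have : s = t := Fin.ext (by omega)
        subst this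
        rw [← hLd0 ω]; exact h1
      · rintro ⟨hA, hL, -⟩ s hs
        have : s = t := Fin.ext (by omega)
        subst this
        exact ⟨by rw [hLd0 ω]; exact hL s (by omega), by rw [hAnat1 s ht ω]; exact hA⟩
    rw [hIio, Finset.prod_empty, hset]; ring
  | succ m IH =>
    intro t' ht' C hC
    have htm : m < τ := by omega
    set t : Fin τ := ⟨m, htm⟩ with htdef
    have htt' : t < t' := by simp only [Fin.lt_def, htdef, Fin.val_mk]; omega
    -- the deterministic sets of error values
    set BL' : Set (UL t') :=
      {u | fL t' (fun s => lbar s.1) (fun s => adSeq d abar lbar s.1) u = lbar t'} with hBL'def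
    set BA' : Set (UA t') := {u | fA t' (hDv d abar lbar t') u = abar t'} with hBA'def
    have hBL' : MeasurableSet BL' := by
      have h1 : Measurable (fun u : UL t' =>
          ((fun s => lbar s.1, (fun s => adSeq d abar lbar s.1, u)) :
            (∀ s : {s : Fin τ // s < t'}, 𝓛 s.1) ×
              (∀ s : {s : Fin τ // s < t'}, 𝓐 s.1) × UL t')) :=
        measurable_const.prodMk (measurable_const.prodMk measurable_id)
      exact ((hfL t').comp h1) (MeasurableSet.of_discrete (s := {lbar t'}))
    have hBA' : MeasurableSet BA' := by
      have h1 : Measurable (fun u : UA t' => ((hDv d abar lbar t', u) : Hist 𝓐 𝓛 t' × UA t')) :=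
        measurable_const.prodMk measurable_id
      exact ((hfA t').comp h1) (MeasurableSet.of_discrete (s := {abar t'}))
    set D' : Set (FutT UL UA UY t) :=
      {p | p.1 ⟨t', htt'⟩ ∈ BL' ∧ p.2.1 ⟨t', htt'⟩ ∈ BA' ∧
        ((fun s : {s : Fin τ // t' < s} => p.1 ⟨s.1, lt_trans htt' s.2⟩,
          fun s : {s : Fin τ // t' < s} => p.2.1 ⟨s.1, lt_trans htt' s.2⟩, p.2.2) :
            FutT UL UA UY t') ∈ C} with hD'def
    have hD' : MeasurableSet D' := by
      have m1 : Measurable (fun p : FutT UL UA UY t => p.1 ⟨t', htt'⟩) :=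
        (measurable_pi_apply _).comp measurable_fst
      have m2 : Measurable (fun p : FutT UL UA UY t => p.2.1 ⟨t', htt'⟩) :=
        (measurable_pi_apply _).comp (measurable_fst.comp measurable_snd)
      have m3 : Measurable (fun p : FutT UL UA UY t =>
          ((fun s : {s : Fin τ // t' < s} => p.1 ⟨s.1, lt_trans htt' s.2⟩,
            fun s : {s : Fin τ // t' < s} => p.2.1 ⟨s.1, lt_trans htt' s.2⟩, p.2.2) :
              FutT UL UA UY t')) := by
        refine Measurable.prodMk ?_ (Measurable.prodMk ?_ (measurable_snd.comp measurable_snd))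
        · exact measurable_pi_lambda _ fun s => (measurable_pi_apply _).comp measurable_fst
        · exact measurable_pi_lambda _ fun s =>
            (measurable_pi_apply _).comp (measurable_fst.comp measurable_snd)
      have : D' = (fun p : FutT UL UA UY t => p.1 ⟨t', htt'⟩) ⁻¹' BL' ∩
          ((fun p : FutT UL UA UY t => p.2.1 ⟨t', htt'⟩) ⁻¹' BA' ∩
            (fun p : FutT UL UA UY t =>
              ((fun s : {s : Fin τ // t' < s} => p.1 ⟨s.1, lt_trans htt' s.2⟩,
                fun s : {s : Fin τ // t' < s} => p.2.1 ⟨s.1, lt_trans htt' s.2⟩, p.2.2) :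
                  FutT UL UA UY t')) ⁻¹' C) := rfl
      rw [this]
      exact (m1 hBL').inter ((m2 hBA').inter (m3 hC))
    have htval : t.val = m := rfl
    -- Claim A: rewriting the counterfactual event one step back
    have claimA : EcfN Ld Anat abar lbar (t'.val + 1) ∩ futm ULv UAv UYv t' ⁻¹' C =
        EcfN Ld Anat abar lbar (t.val + 1) ∩ futm ULv UAv UYv t ⁻¹' D' := by
      ext ω
      simp only [Set.mem_inter_iff, Set.mem_preimage, hD'def, Set.mem_setOf_eq, futm,
        hBL'def, hBA'def, mem_EcfN]
      constructor
      · rintro ⟨hE, hCm⟩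
        have hEt' : ω ∈ EcfN Ld Anat abar lbar t'.val := by
          rw [mem_EcfN]; exact fun s hs => hE s (by omega)
        have hLt' : Ld t' ω = lbar t' := (hE t' (by omega)).1
        have hAnt' : Anat t' ω = abar t' := (hE t' (by omega)).2
        refine ⟨fun s hs => hE s (by omega), ?_, ?_, hCm⟩
        · rw [← Ld_det hLd hAd hEt']; exact hLt'
        · rw [← Anat_det hAnat hAd hEt' hLt']; exact hAnt'
      · rintro ⟨hEt, hBLm, hBAm, hCm⟩
        have hEt' : ω ∈ EcfN Ld Anat abar lbar t'.val := by
          rw [mem_EcfN]; exact fun s hs => hEt s (by omega)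
        have hLt' : Ld t' ω = lbar t' := by rw [Ld_det hLd hAd hEt']; exact hBLm
        have hAnt' : Anat t' ω = abar t' := by
          rw [Anat_det hAnat hAd hEt' hLt']; exact hBAm
        refine ⟨?_, hCm⟩
        intro s hs
        rcases Nat.lt_or_ge s.val (m + 1) with h | h
        · exact hEt s (by omega)
        · have hst : s = t' := Fin.ext (by omega)
          subst hst; exact ⟨hLt', hAnt'⟩
    -- Claim C: rewriting the observed event one step forward
    have claimC : OevN M d abar lbar (t.val + 1) ∩ futm ULv UAv UYv t ⁻¹' D' =
        NevD M d abar lbar t' ∩ futm ULv UAv UYv t' ⁻¹' C := by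
      ext ω
      simp only [Set.mem_inter_iff, Set.mem_preimage, hD'def, Set.mem_setOf_eq, futm,
        hBL'def, hBA'def, NevD, mem_OevN]
      constructor
      · rintro ⟨hO, hBLm, hBAm, hCm⟩
        have hO' : ω ∈ OevN M d abar lbar t'.val := by
          rw [mem_OevN]; exact fun s hs => hO s (by omega)
        have hLt' : M.L t' ω = lbar t' := by rw [L_det hLeq hO']; exact hBLm
        have hHev : ω ∈ M.histEvent t' (hDv d abar lbar t') := by
          rw [mem_histEvent_iff]
          refine ⟨fun s hs => ?_, fun s hs => (hO s (by omega)).2⟩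
          rcases Nat.lt_or_ge s.val t'.val with h | h
          · exact (hO s (by omega)).1
          · have : s = t' := Fin.ext (by omega)
            subst this; exact hLt'
        exact ⟨⟨by rw [A_det hAeq hHev]; exact hBAm, hHev⟩, hCm⟩
      · rintro ⟨⟨hA, hHev⟩, hCm⟩
        obtain ⟨hLpart, hApart⟩ := mem_histEvent_iff.mp hHev
        have hO' : ω ∈ OevN M d abar lbar t'.val := by
          rw [mem_OevN]; exact fun s hs => ⟨hLpart s (by omega), hApart s (by omega)⟩
        refine ⟨fun s hs => ⟨hLpart s (by omega), hApart s (by omega)⟩, ?_, ?_, hCm⟩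
        · rw [← L_det hLeq hO']; exact hLpart t' (by omega)
        · rw [← A_det hAeq hHev]; exact hA
    have claimB := key_swap M ULv UAv UYv fA hfA hAeq d hpos hrand abar lbar t D' hD'
    -- assembling the inductive step
    have hIio : Finset.Iio t' = insert t (Finset.Iio t) := by
      ext k
      simp only [Finset.mem_Iio, Finset.mem_insert, Fin.lt_def, Fin.ext_iff, htval]
      omega
    have htnot : t ∉ Finset.Iio t := by simp
    rw [hIio, Finset.prod_insert htnot, Finset.prod_insert htnot, claimA]
    calc M.μ (EcfN Ld Anat abar lbar (t.val + 1) ∩ futm ULv UAv UYv t ⁻¹' D') *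
          (M.μ (OevN M d abar lbar (t.val + 1)) *
            ∏ k ∈ Finset.Iio t, M.μ (OevN M d abar lbar (k.val + 1)))
        = (M.μ (EcfN Ld Anat abar lbar (t.val + 1) ∩ futm ULv UAv UYv t ⁻¹' D') *
            ∏ k ∈ Finset.Iio t, M.μ (OevN M d abar lbar (k.val + 1))) *
            M.μ (OevN M d abar lbar (t.val + 1)) := by ring
      _ = ((∏ k ∈ Finset.Iio t, M.μ (NevD M d abar lbar k)) *
            M.μ (NevD M d abar lbar t ∩ futm ULv UAv UYv t ⁻¹' D')) *
            M.μ (OevN M d abar lbar (t.val + 1)) := by rw [IH t rfl D' hD']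
      _ = (∏ k ∈ Finset.Iio t, M.μ (NevD M d abar lbar k)) *
            (M.μ (NevD M d abar lbar t ∩ futm ULv UAv UYv t ⁻¹' D') *
              M.μ (OevN M d abar lbar (t.val + 1))) := by ring
      _ = (∏ k ∈ Finset.Iio t, M.μ (NevD M d abar lbar k)) *
            (M.μ (NevD M d abar lbar t) *
              M.μ (OevN M d abar lbar (t.val + 1) ∩ futm ULv UAv UYv t ⁻¹' D')) := by
          rw [claimB]
      _ = M.μ (NevD M d abar lbar t) * (∏ k ∈ Finset.Iio t, M.μ (NevD M d abar lbar k)) *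
            M.μ (NevD M d abar lbar t' ∩ futm ULv UAv UYv t' ⁻¹' C) := by
          rw [claimC]; ring

end AuxKey
section AuxMeas

set_option linter.unusedSectionVars false

variable [∀ t, Fintype (𝓐 t)] [∀ t, Fintype (𝓛 t)] [∀ t, DecidableEq (𝓐 t)]
    [∀ t, DecidableEq (𝓛 t)]
    [∀ t, MeasurableSpace (𝓐 t)] [∀ t, DiscreteMeasurableSpace (𝓐 t)]
    [∀ t, MeasurableSpace (𝓛 t)] [∀ t, DiscreteMeasurableSpace (𝓛 t)]
    {UL UA : Fin τ → Type}
    [∀ t, MeasurableSpace (UL t)] [∀ t, MeasurableSpace (UA t)]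

lemma cf_measurable
    (ULv : ∀ t : Fin τ, Ω → UL t) (UAv : ∀ t : Fin τ, Ω → UA t)
    (hULv : ∀ t, Measurable (ULv t)) (hUAv : ∀ t, Measurable (UAv t))
    (fL : ∀ t : Fin τ, (∀ s : {s : Fin τ // s < t}, 𝓛 s.1) →
      (∀ s : {s : Fin τ // s < t}, 𝓐 s.1) → UL t → 𝓛 t)
    (fA : ∀ t : Fin τ, Hist 𝓐 𝓛 t → UA t → 𝓐 t)
    (hfL : ∀ t, Measurable (fun p : (∀ s : {s : Fin τ // s < t}, 𝓛 s.1) ×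
      (∀ s : {s : Fin τ // s < t}, 𝓐 s.1) × UL t => fL t p.1 p.2.1 p.2.2))
    (hfA : ∀ t, Measurable (fun p : Hist 𝓐 𝓛 t × UA t => fA t p.1 p.2))
    (d : Policy 𝓐 𝓛)
    (Ld : ∀ t : Fin τ, Ω → 𝓛 t) (Ad : ∀ t : Fin τ, Ω → 𝓐 t)
    (Anat : ∀ t : Fin τ, Ω → 𝓐 t)
    (hLd : ∀ (t : Fin τ) (ω : Ω),
      Ld t ω = fL t (fun s => Ld s.1 ω) (fun s => Ad s.1 ω) (ULv t ω))
    (hAnat : ∀ (t : Fin τ) (ω : Ω),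
      Anat t ω = fA t (fun s => Ld s.1 ω, fun s => Ad s.1 ω) (UAv t ω))
    (hAd : ∀ (t : Fin τ) (ω : Ω),
      Ad t ω = d t (fun s => Anat s.1 ω) (fun s => Ld s.1 ω, fun s => Ad s.1 ω)) :
    ∀ t : Fin τ, Measurable (Ld t) ∧ Measurable (Anat t) ∧ Measurable (Ad t) := by
  have main : ∀ m : ℕ, ∀ t : Fin τ, t.val ≤ m →
      Measurable (Ld t) ∧ Measurable (Anat t) ∧ Measurable (Ad t) := by
    intro m
    induction m using Nat.strong_induction_on with
    | _ m IH =>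
      intro t ht
      have hLdm : Measurable (Ld t) := by
        have he : Ld t = fun ω => fL t (fun s => Ld s.1 ω) (fun s => Ad s.1 ω) (ULv t ω) :=
          funext fun ω => hLd t ω
        rw [he]
        have h1 : Measurable (fun ω : Ω => (fun s : {s : Fin τ // s < t} => Ld s.1 ω)) :=
          measurable_pi_lambda _ fun s =>
            (IH s.1.val (by have := Fin.lt_def.mp s.2; omega) s.1 le_rfl).1
        have h2 : Measurable (fun ω : Ω => (fun s : {s : Fin τ // s < t} => Ad s.1 ω)) :=
          measurable_pi_lambda _ fun s =>
            (IH s.1.val (by have := Fin.lt_def.mp s.2; omega) s.1 le_rfl).2.2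
        exact (hfL t).comp (h1.prodMk (h2.prodMk (hULv t)))
      have h1' : Measurable (fun ω : Ω => (fun s : {s : Fin τ // s ≤ t} => Ld s.1 ω)) := by
        refine measurable_pi_lambda _ fun s => ?_
        rcases Nat.lt_or_ge s.1.val t.val with h | h
        · exact (IH s.1.val (by omega) s.1 le_rfl).1
        · have hst : s.1 = t := Fin.ext (by have := Fin.le_def.mp s.2; omega)
          rw [hst]; exact hLdm
      have h2' : Measurable (fun ω : Ω => (fun s : {s : Fin τ // s < t} => Ad s.1 ω)) :=
        measurable_pi_lambda _ fun s =>
          (IH s.1.val (by have := Fin.lt_def.mp s.2; omega) s.1 le_rfl).2.2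
      have hAnm : Measurable (Anat t) := by
        have he : Anat t =
            fun ω => fA t (fun s => Ld s.1 ω, fun s => Ad s.1 ω) (UAv t ω) :=
          funext fun ω => hAnat t ω
        rw [he]
        exact (hfA t).comp ((h1'.prodMk h2').prodMk (hUAv t))
      have hAdm : Measurable (Ad t) := by
        have he : Ad t =
            fun ω => d t (fun s => Anat s.1 ω) (fun s => Ld s.1 ω, fun s => Ad s.1 ω) :=
          funext fun ω => hAd t ω
        rw [he]
        have houter : Measurable
            (fun q : SbarN 𝓐 (t.val + 1) × Hist 𝓐 𝓛 t => d t q.1 q.2) :=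
          aux_meas_of_countable _
        have h0 : Measurable
            (fun ω : Ω => (fun s : {s : Fin τ // s.val < t.val + 1} => Anat s.1 ω)) := by
          refine measurable_pi_lambda _ fun s => ?_
          rcases Nat.lt_or_ge s.1.val t.val with h | h
          · exact (IH s.1.val (by omega) s.1 le_rfl).2.1
          · have hst : s.1 = t := Fin.ext (by have := s.2; omega)
            rw [hst]; exact hAnm
        exact houter.comp (h0.prodMk (h1'.prodMk h2'))
      exact ⟨hLdm, hAnm, hAdm⟩
  exact fun t => main t.val t le_rfl

end AuxMeas
/-- **Identification of the effect of G-LMTPs** (Theorem 1 of the paper).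
Under (i) full positivity and (ii) strong sequential randomization (for each `t`,
`U_{A,t}` is conditionally independent of the future exogenous errors given `H_t`; stated
here elementarily given that `H_t` takes finitely many values), the counterfactual mean
identifies as the g-computation formula: `E[Y(Ā^d)] = gcomp`. -/
theorem glmtp_identification
    [∀ t, Fintype (𝓐 t)] [∀ t, Nonempty (𝓐 t)] [∀ t, DecidableEq (𝓐 t)]
    [∀ t, Fintype (𝓛 t)] [∀ t, Nonempty (𝓛 t)] [∀ t, DecidableEq (𝓛 t)]
    [∀ t, MeasurableSpace (𝓐 t)] [∀ t, DiscreteMeasurableSpace (𝓐 t)]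
    [∀ t, MeasurableSpace (𝓛 t)] [∀ t, DiscreteMeasurableSpace (𝓛 t)]
    -- exogenous-error spaces (standard Borel)
    {UL UA : Fin τ → Type} {UY : Type}
    [∀ t, MeasurableSpace (UL t)] [∀ t, StandardBorelSpace (UL t)]
    [∀ t, MeasurableSpace (UA t)] [∀ t, StandardBorelSpace (UA t)]
    [MeasurableSpace UY] [StandardBorelSpace UY]
    (M : Model 𝓐 𝓛 Ω) [IsProbabilityMeasure M.μ] (hmeas : M.Meas)
    -- the exogenous errors
    (ULv : ∀ t : Fin τ, Ω → UL t) (UAv : ∀ t : Fin τ, Ω → UA t) (UYv : Ω → UY)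
    (hULv : ∀ t, Measurable (ULv t)) (hUAv : ∀ t, Measurable (UAv t))
    (hUYv : Measurable UYv)
    -- the structural functions (measurable; fY bounded)
    (fL : ∀ t : Fin τ, (∀ s : {s : Fin τ // s < t}, 𝓛 s.1) →
      (∀ s : {s : Fin τ // s < t}, 𝓐 s.1) → UL t → 𝓛 t)
    (fA : ∀ t : Fin τ, Hist 𝓐 𝓛 t → UA t → 𝓐 t)
    (fY : (∀ s : Fin τ, 𝓛 s) → (∀ s : Fin τ, 𝓐 s) → UY → ℝ)
    (hfL : ∀ t, Measurable (fun p : (∀ s : {s : Fin τ // s < t}, 𝓛 s.1) ×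
      (∀ s : {s : Fin τ // s < t}, 𝓐 s.1) × UL t => fL t p.1 p.2.1 p.2.2))
    (hfA : ∀ t, Measurable (fun p : Hist 𝓐 𝓛 t × UA t => fA t p.1 p.2))
    (hfY : Measurable (fun p : (∀ s : Fin τ, 𝓛 s) × (∀ s : Fin τ, 𝓐 s) × UY =>
      fY p.1 p.2.1 p.2.2))
    (hfYbdd : ∃ C, ∀ l a u, |fY l a u| ≤ C)
    -- the structural equations for the observed variables
    (hLeq : ∀ (t : Fin τ) (ω : Ω),
      M.L t ω = fL t (fun s => M.L s.1 ω) (fun s => M.A s.1 ω) (ULv t ω))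
    (hAeq : ∀ (t : Fin τ) (ω : Ω), M.A t ω = fA t (M.Hproc t ω) (UAv t ω))
    (hYeq : ∀ ω : Ω, M.Y ω = fY (fun s => M.L s ω) (fun s => M.A s ω) (UYv ω))
    -- the policy and the counterfactual variables it generates
    (d : Policy 𝓐 𝓛)
    (Ld : ∀ t : Fin τ, Ω → 𝓛 t) (Ad : ∀ t : Fin τ, Ω → 𝓐 t)
    (Anat : ∀ t : Fin τ, Ω → 𝓐 t) (Yd : Ω → ℝ)
    (hLd : ∀ (t : Fin τ) (ω : Ω),
      Ld t ω = fL t (fun s => Ld s.1 ω) (fun s => Ad s.1 ω) (ULv t ω))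
    (hAnat : ∀ (t : Fin τ) (ω : Ω),
      Anat t ω = fA t (fun s => Ld s.1 ω, fun s => Ad s.1 ω) (UAv t ω))
    (hAnat1 : ∀ (t : Fin τ), t.val = 0 → ∀ ω : Ω, Anat t ω = M.A t ω)
    (hAd : ∀ (t : Fin τ) (ω : Ω),
      Ad t ω = d t (fun s => Anat s.1 ω) (fun s => Ld s.1 ω, fun s => Ad s.1 ω))
    (hYd : ∀ ω : Ω, Yd ω = fY (fun s => Ld s ω) (fun s => Ad s ω) (UYv ω))
    (hYdmeas : Measurable Yd)
    -- Assumption (i): full positivity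
    (hpos : M.Positivity)
    -- Assumption (ii): strong sequential randomization, elementarily given `H_t = h`
    (hrand : ∀ (t : Fin τ) (B : Set (UA t)) (C : Set (FutT UL UA UY t)),
      MeasurableSet B → MeasurableSet C → ∀ h : Hist 𝓐 𝓛 t,
        M.μ ({ω | UAv t ω ∈ B} ∩
            {ω | (⟨fun s => ULv s.1 ω, fun s => UAv s.1 ω, UYv ω⟩ : FutT UL UA UY t) ∈ C} ∩
            M.histEvent t h) *
          M.μ (M.histEvent t h) =
        M.μ ({ω | UAv t ω ∈ B} ∩ M.histEvent t h) *
          M.μ ({ω | (⟨fun s => ULv s.1 ω, fun s => UAv s.1 ω, UYv ω⟩ :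
              FutT UL UA UY t) ∈ C} ∩ M.histEvent t h)) :
    -- conclusion: the counterfactual mean equals the g-computation formula
    (∫ ω, Yd ω ∂M.μ) = gcomp M d := by
  classical
  obtain ⟨CY, hCY⟩ := hfYbdd
  -- measurability of the counterfactual processes
  have measCF := cf_measurable ULv UAv hULv hUAv fL fA hfL hfA d Ld Ad Anat hLd hAnat hAd
  have measEcf : ∀ (abar : ∀ s : Fin τ, 𝓐 s) (lbar : ∀ s : Fin τ, 𝓛 s) (n : ℕ),
      MeasurableSet (EcfN Ld Anat abar lbar n) := by
    intro abar lbar n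
    have he : EcfN Ld Anat abar lbar n =
        ⋂ s : Fin τ, ⋂ _ : s.val < n, (Ld s ⁻¹' {lbar s} ∩ Anat s ⁻¹' {abar s}) := by
      ext ω; simp [EcfN, forall_and]
    rw [he]
    exact MeasurableSet.iInter fun s => MeasurableSet.iInter fun _ =>
      ((measCF s).1 MeasurableSet.of_discrete).inter ((measCF s).2.1 MeasurableSet.of_discrete)
  have hYdInt : Integrable Yd M.μ := by
    refine Integrable.mono' (integrable_const CY) hYdmeas.aestronglyMeasurable
      (ae_of_all _ fun ω => ?_)
    rw [Real.norm_eq_abs, hYd ω]; exact hCY _ _ _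
  -- partition of the counterfactual mean over trajectories
  have hpart : (∫ ω, Yd ω ∂M.μ) = ∑ abar : ∀ s : Fin τ, 𝓐 s, ∑ lbar : ∀ s : Fin τ, 𝓛 s,
      ∫ ω in EcfN Ld Anat abar lbar τ, Yd ω ∂M.μ := by
    have hdecomp : ∀ ω : Ω, Yd ω = ∑ abar : ∀ s : Fin τ, 𝓐 s, ∑ lbar : ∀ s : Fin τ, 𝓛 s,
        (EcfN Ld Anat abar lbar τ).indicator Yd ω := by
      intro ω
      rw [Fintype.sum_eq_single (fun s => Anat s ω) ?hout]
      case hout =>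
        intro ab hab
        refine Finset.sum_eq_zero fun lb _ => Set.indicator_of_notMem (fun hmem => ?_) Yd
        exact hab (funext fun s => ((mem_EcfN.mp hmem) s s.isLt).2.symm)
      rw [Fintype.sum_eq_single (fun s => Ld s ω) ?hout2]
      case hout2 =>
        intro lb hlb
        refine Set.indicator_of_notMem (fun hmem => ?_) Yd
        exact hlb (funext fun s => ((mem_EcfN.mp hmem) s s.isLt).1.symm)
      rw [Set.indicator_of_mem (mem_EcfN.mpr fun s _ => ⟨rfl, rfl⟩)]
    have he : Yd = fun ω => ∑ abar : ∀ s : Fin τ, 𝓐 s, ∑ lbar : ∀ s : Fin τ, 𝓛 s,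
        (EcfN Ld Anat abar lbar τ).indicator Yd ω := funext hdecomp
    calc (∫ ω, Yd ω ∂M.μ)
        = ∫ ω, (∑ abar : ∀ s : Fin τ, 𝓐 s, ∑ lbar : ∀ s : Fin τ, 𝓛 s,
            (EcfN Ld Anat abar lbar τ).indicator Yd ω) ∂M.μ := by rw [← he]
      _ = ∑ abar : ∀ s : Fin τ, 𝓐 s, ∑ lbar : ∀ s : Fin τ, 𝓛 s,
            ∫ ω in EcfN Ld Anat abar lbar τ, Yd ω ∂M.μ := by
          rw [integral_finset_sum _ fun abar _ =>
            integrable_finset_sum _ fun lbar _ => hYdInt.indicator (measEcf abar lbar τ)]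
          refine Finset.sum_congr rfl fun abar _ => ?_
          rw [integral_finset_sum _ fun lbar _ => hYdInt.indicator (measEcf abar lbar τ)]
          exact Finset.sum_congr rfl fun lbar _ => integral_indicator (measEcf abar lbar τ)
  rw [hpart]
  unfold gcomp
  refine Finset.sum_congr rfl fun abar _ => Finset.sum_congr rfl fun lbar _ => ?_
  -- rewrite the sets appearing in the g-computation formula
  rw [OevN_top (M := M) (d := d) (abar := abar) (lbar := lbar)]
  have hprodeq : (∏ k : Fin τ,
      (M.μ {ω | (∀ s : Fin τ, s < k → (M.L s ω = lbar s ∧ M.A s ω = adSeq d abar lbar s)) ∧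
            M.A k ω = abar k ∧ M.L k ω = lbar k}).toReal /
      (M.μ {ω | ∀ s : Fin τ, s < k →
            (M.L s ω = lbar s ∧ M.A s ω = adSeq d abar lbar s)}).toReal) =
      ∏ k : Fin τ, (M.μ (NevD M d abar lbar k)).toReal /
        (M.μ (OevN M d abar lbar k.val)).toReal := by
    refine Finset.prod_congr rfl fun k _ => ?_
    rw [← NevD_eq, OevN_fin]
  rw [hprodeq]
  rcases Nat.eq_zero_or_pos τ with hτ | hτ
  · -- degenerate case τ = 0
    subst hτ
    have hE : EcfN Ld Anat abar lbar 0 = Set.univ := by ext ω; simp [EcfN]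
    have hO : OevN M d abar lbar 0 = Set.univ := by ext ω; simp [OevN]
    have hY : Yd = M.Y := by
      funext ω
      rw [hYd ω, hYeq ω]
      have e1 : (fun s : Fin 0 => Ld s ω) = fun s => M.L s ω := funext fun s => s.elim0
      have e2 : (fun s : Fin 0 => Ad s ω) = fun s => M.A s ω := funext fun s => s.elim0
      rw [e1, e2]
    rw [hE, hO, hY]
    simp [condExpOn, Finset.univ_eq_empty, measure_univ]
  · -- main case τ > 0
    set T : Fin τ := ⟨τ - 1, by omega⟩ with hTdef
    have hTval : T.val = τ - 1 := rfl
    have hTv : T.val + 1 = τ := by omega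
    have huniv : (Finset.univ : Finset (Fin τ)) = insert T (Finset.Iio T) := by
      ext k
      have hk := k.isLt
      simp only [Finset.mem_univ, Finset.mem_insert, Finset.mem_Iio, Fin.lt_def,
        Fin.ext_iff, hTval, true_iff]
      omega
    have hTnot : T ∉ Finset.Iio T := by simp
    -- the key measure identity, specialized to events generated by `U_Y`
    have keyS : ∀ S : Set UY, MeasurableSet S →
        M.μ (EcfN Ld Anat abar lbar τ ∩ UYv ⁻¹' S) *
          (∏ k : Fin τ, M.μ (OevN M d abar lbar (k.val + 1))) =
        (∏ k : Fin τ, M.μ (NevD M d abar lbar k)) *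
          M.μ (OevN M d abar lbar τ ∩ UYv ⁻¹' S) := by
      intro S hS
      have hC : MeasurableSet {p : FutT UL UA UY T | p.2.2 ∈ S} :=
        (measurable_snd.comp measurable_snd) hS
      have h1 := key_induction M ULv UAv UYv fL fA hfL hfA hLeq hAeq d Ld Ad Anat hLd
        hAnat hAnat1 hAd hpos hrand abar lbar T.val T rfl
        {p : FutT UL UA UY T | p.2.2 ∈ S} hC
      have hswap := key_swap M ULv UAv UYv fA hfA hAeq d hpos hrand abar lbar T
        {p : FutT UL UA UY T | p.2.2 ∈ S} hC
      have hpre : futm ULv UAv UYv T ⁻¹' {p : FutT UL UA UY T | p.2.2 ∈ S} =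
          UYv ⁻¹' S := rfl
      rw [hpre, hTv] at h1 hswap
      rw [huniv, Finset.prod_insert hTnot, Finset.prod_insert hTnot, hTv]
      calc M.μ (EcfN Ld Anat abar lbar τ ∩ UYv ⁻¹' S) *
            (M.μ (OevN M d abar lbar τ) *
              ∏ k ∈ Finset.Iio T, M.μ (OevN M d abar lbar (k.val + 1)))
          = (M.μ (EcfN Ld Anat abar lbar τ ∩ UYv ⁻¹' S) *
              ∏ k ∈ Finset.Iio T, M.μ (OevN M d abar lbar (k.val + 1))) *
              M.μ (OevN M d abar lbar τ) := by ring
        _ = ((∏ k ∈ Finset.Iio T, M.μ (NevD M d abar lbar k)) *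
              M.μ (NevD M d abar lbar T ∩ UYv ⁻¹' S)) *
              M.μ (OevN M d abar lbar τ) := by rw [h1]
        _ = (∏ k ∈ Finset.Iio T, M.μ (NevD M d abar lbar k)) *
              (M.μ (NevD M d abar lbar T ∩ UYv ⁻¹' S) * M.μ (OevN M d abar lbar τ)) := by
            ring
        _ = (∏ k ∈ Finset.Iio T, M.μ (NevD M d abar lbar k)) *
              (M.μ (NevD M d abar lbar T) * M.μ (OevN M d abar lbar τ ∩ UYv ⁻¹' S)) := by
            rw [hswap]
        _ = M.μ (NevD M d abar lbar T) *
              (∏ k ∈ Finset.Iio T, M.μ (NevD M d abar lbar k)) *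
              M.μ (OevN M d abar lbar τ ∩ UYv ⁻¹' S) := by ring
    -- positivity
    have hOτpos : 0 < M.μ (OevN M d abar lbar τ) := by
      have h2 : OevN M d abar lbar τ = OevN M d abar lbar (T.val + 1) := by rw [hTv]
      rw [h2, OevN_succ]
      exact hpos T (adSeq d abar lbar T) (hDv d abar lbar T)
    have hOn : ∀ n : ℕ, 0 < M.μ (OevN M d abar lbar n) :=
      fun n => lt_of_lt_of_le hOτpos (measure_mono (OevN_subset n))
    have hOnR : ∀ n : ℕ, 0 < (M.μ (OevN M d abar lbar n)).toReal :=
      fun n => ENNReal.toReal_pos (hOn n).ne' (measure_ne_top _ _)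
    -- integration step
    have hg : Measurable (fun u : UY => fY lbar (fun s => adSeq d abar lbar s) u) :=
      hfY.comp (measurable_const.prodMk (measurable_const.prodMk measurable_id))
    have hint := aux_int M.μ UYv hUYv _ hg (EcfN Ld Anat abar lbar τ)
      (OevN M d abar lbar τ) _ _ keyS
    -- identify the integrands
    have hYdE : ∫ ω in EcfN Ld Anat abar lbar τ, Yd ω ∂M.μ =
        ∫ ω in EcfN Ld Anat abar lbar τ,
          fY lbar (fun s => adSeq d abar lbar s) (UYv ω) ∂M.μ := by
      refine setIntegral_congr_fun (measEcf abar lbar τ) fun ω hω => ?_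
      rw [hYd ω]
      have e1 : (fun s => Ld s ω) = lbar := funext fun s => (mem_EcfN.mp hω s s.isLt).1
      have e2 : (fun s => Ad s ω) = fun s => adSeq d abar lbar s :=
        funext fun s => adConsist hAd hω s s.isLt
      rw [e1, e2]
    have hYO : (∫ ω in OevN M d abar lbar τ,
          fY lbar (fun s => adSeq d abar lbar s) (UYv ω) ∂M.μ) =
        ∫ ω in OevN M d abar lbar τ, M.Y ω ∂M.μ := by
      refine setIntegral_congr_fun (OevN_measurable hmeas τ) fun ω hω => ?_
      rw [hYeq ω]
      have e1 : (fun s => M.L s ω) = lbar := funext fun s => (mem_OevN.mp hω s s.isLt).1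
      have e2 : (fun s => M.A s ω) = fun s => adSeq d abar lbar s :=
        funext fun s => (mem_OevN.mp hω s s.isLt).2
      rw [e1, e2]
    rw [hYdE]
    rw [hYO] at hint
    rw [ENNReal.toReal_prod, ENNReal.toReal_prod] at hint
    -- final algebra
    have shift : (M.μ (OevN M d abar lbar τ)).toReal *
        ∏ k : Fin τ, (M.μ (OevN M d abar lbar k.val)).toReal =
        ∏ k : Fin τ, (M.μ (OevN M d abar lbar (k.val + 1))).toReal := by
      have h0 : (M.μ (OevN M d abar lbar 0)).toReal = 1 := by
        rw [OevN_zero (M := M) (d := d) (abar := abar) (lbar := lbar)]; simp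
      rw [Fin.prod_univ_eq_prod_range (fun i => (M.μ (OevN M d abar lbar i)).toReal) τ,
        Fin.prod_univ_eq_prod_range (fun i => (M.μ (OevN M d abar lbar (i + 1))).toReal) τ]
      calc (M.μ (OevN M d abar lbar τ)).toReal *
            ∏ i ∈ Finset.range τ, (M.μ (OevN M d abar lbar i)).toReal
          = (∏ i ∈ Finset.range τ, (M.μ (OevN M d abar lbar i)).toReal) *
              (M.μ (OevN M d abar lbar τ)).toReal := by ring
        _ = ∏ i ∈ Finset.range (τ + 1), (M.μ (OevN M d abar lbar i)).toReal :=
            (Finset.prod_range_succ _ _).symm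
        _ = (∏ i ∈ Finset.range τ, (M.μ (OevN M d abar lbar (i + 1))).toReal) *
              (M.μ (OevN M d abar lbar 0)).toReal := Finset.prod_range_succ' _ _
        _ = ∏ i ∈ Finset.range τ, (M.μ (OevN M d abar lbar (i + 1))).toReal := by
            rw [h0, mul_one]
    rw [← shift] at hint
    unfold condExpOn
    rw [Finset.prod_div_distrib]
    have hPpos : 0 < ∏ k : Fin τ, (M.μ (OevN M d abar lbar k.val)).toReal :=
      Finset.prod_pos fun k _ => hOnR k.val
    have hFτ : 0 < (M.μ (OevN M d abar lbar τ)).toReal := hOnR τ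
    rw [div_mul_div_comm, eq_div_iff (by positivity)]
    linear_combination hint
end GLMTP
end

section
/- (Change-of-measure identity for one step of the sequential regression.) Fix k ∈ {1,…,τ}. Let m₁ : 𝒮_k × 𝒜_k × ℋ_k → ℝ be any function and define q₁(s̄_{k−1}, a_k, h_k) = m₁((s̄_{k−1}, a_k), d_k((s̄_{k−1}, a_k), h_k), h_k). Then for every s̄_{k−1} ∈ 𝒮_{k−1} and every (a, h) ∈ 𝒜_{k−1} × ℋ_{k−1}: E[q₁(s̄_{k−1}, A_k, H_k) ∣ A_{k−1} = a, H_{k−1} = h] = E[ Σ_{s_k ∈ 𝒜_k} 1{A_k = d_k((s̄_{k−1}, s_k), H_k)} · (g_k(s_k∣H_k)/g_k(A_k∣H_k)) · m₁((s̄_{k−1}, s_k), A_k, H_k) ∣ A_{k−1} = a, H_{k−1} = h ], where for k = 1 the conditioning is omitted (both sides are unconditional expectations). -/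
open MeasureTheory Finset

namespace GLMTP

variable {τ : ℕ}

variable {𝓐 𝓛 : Fin τ → Type}

/-- The empty augmented history `s̄_0`. -/
def emptySbar (𝓐 : Fin τ → Type) : SbarN 𝓐 0 :=
  fun s => absurd s.2 (Nat.not_lt_zero _)

def restrictSb {tp tp' : ℕ} (h : tp' ≤ tp) (sb : SbarN 𝓐 tp) : SbarN 𝓐 tp' :=
  fun s => sb ⟨s.1, lt_of_lt_of_le s.2 h⟩

/-- Append a treatment value at time `t` to an augmented history `s̄_{t-1}`. -/
def snoc {t : Fin τ} (sb : SbarN 𝓐 t.val) (a : 𝓐 t) : SbarN 𝓐 (t.val + 1) :=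
  fun s =>
    if h : s.1 = t then cast (congrArg 𝓐 h).symm a
    else sb ⟨s.1, lt_of_le_of_ne (Nat.lt_succ_iff.mp s.2) (fun hv => h (Fin.ext hv))⟩

/-- Extension of an augmented history: treatment values at times `tp ≤ u ≤ k` (0-based),
i.e. the summation variables `s_{t+1}, …, s_k` of the paper. -/
abbrev Ext (𝓐 : Fin τ → Type) (tp : ℕ) (k : Fin τ) : Type :=
  ∀ s : {s : Fin τ // tp ≤ s.val ∧ s.val ≤ k.val}, 𝓐 s.1

def mergeExt {tp : ℕ} {k : Fin τ} (sb : SbarN 𝓐 tp) (e : Ext 𝓐 tp k) :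
    SbarN 𝓐 (k.val + 1) :=
  fun s =>
    if h : s.1.val < tp then sb ⟨s.1, h⟩
    else e ⟨s.1, ⟨not_lt.mp h, Nat.lt_succ_iff.mp s.2⟩⟩

variable {Ω : Type} [MeasurableSpace Ω]

/-- The true treatment mechanism `g_t(a ∣ h) = P(A_t = a ∣ H_t = h)`. -/
noncomputable def Model.g (M : Model 𝓐 𝓛 Ω) (t : Fin τ) (a : 𝓐 t) (h : Hist 𝓐 𝓛 t) : ℝ :=
  (M.μ (M.condEvent t a h)).toReal / (M.μ (M.histEvent t h)).toReal

/-- `q_t` obtained from `m_t`: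
`q_t(s̄_{t-1}, a_t, h_t) = m_t((s̄_{t-1},a_t), d_t((s̄_{t-1},a_t), h_t), h_t)`. -/
def qOf (d : Policy 𝓐 𝓛)
    (m : ∀ t : Fin τ, SbarN 𝓐 (t.val + 1) → 𝓐 t → Hist 𝓐 𝓛 t → ℝ)
    (t : Fin τ) (sb : SbarN 𝓐 t.val) (a : 𝓐 t) (h : Hist 𝓐 𝓛 t) : ℝ :=
  m t (snoc sb a) (d t (snoc sb a) h) h

/-- `ω ↦ q_{k+1}(s̄_k, A_{k+1}(ω), H_{k+1}(ω))`, with the convention `q_{τ+1} := Y`. -/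
def Model.qNext (M : Model 𝓐 𝓛 Ω)
    (q : ∀ t : Fin τ, SbarN 𝓐 t.val → 𝓐 t → Hist 𝓐 𝓛 t → ℝ)
    (k : Fin τ) (sb : SbarN 𝓐 (k.val + 1)) (ω : Ω) : ℝ :=
  if h : k.val + 1 < τ then
    q ⟨k.val + 1, h⟩ sb (M.A ⟨k.val + 1, h⟩ ω) (M.Hproc ⟨k.val + 1, h⟩ ω)
  else M.Y ω

/-- `m` is the (true) sequential-regression family for the policy `d`:
`m_t(s̄_t, a_t, h_t) = E[q_{t+1}(s̄_t, A_{t+1}, H_{t+1}) ∣ A_t = a_t, H_t = h_t]`,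
with `q_{τ+1} = Y` (so at `t = τ` this reads `m_τ(a_τ,h_τ) = E[Y ∣ A_τ = a_τ, H_τ = h_τ]`,
extended independently of `s̄_τ`). -/
def IsSeqReg (M : Model 𝓐 𝓛 Ω) (d : Policy 𝓐 𝓛)
    (m : ∀ t : Fin τ, SbarN 𝓐 (t.val + 1) → 𝓐 t → Hist 𝓐 𝓛 t → ℝ) : Prop :=
  ∀ (t : Fin τ) (sb : SbarN 𝓐 (t.val + 1)) (a : 𝓐 t) (h : Hist 𝓐 𝓛 t),
    m t sb a h = condExpOn M.μ (M.condEvent t a h) (M.qNext (qOf d m) t sb)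

/-- The parameter `θ = E[q_1(A_1, H_1)]`. -/
noncomputable def theta (hτ : 0 < τ) (M : Model 𝓐 𝓛 Ω) (d : Policy 𝓐 𝓛)
    (m : ∀ t : Fin τ, SbarN 𝓐 (t.val + 1) → 𝓐 t → Hist 𝓐 𝓛 t → ℝ) : ℝ :=
  ∫ ω, qOf d m ⟨0, hτ⟩ (emptySbar 𝓐) (M.A ⟨0, hτ⟩ ω) (M.Hproc ⟨0, hτ⟩ ω) ∂M.μ

variable [∀ t, DecidableEq (𝓐 t)] [∀ t, Fintype (𝓐 t)]

/-- Indicator `D_{t,k}(s̄_k)`: all treatments at times `tp ≤ u ≤ k` (0-based) follow the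
policy applied to the augmented history. -/
noncomputable def Dind (M : Model 𝓐 𝓛 Ω) (d : Policy 𝓐 𝓛) (tp : ℕ) (k : Fin τ)
    (sb : SbarN 𝓐 (k.val + 1)) (ω : Ω) : ℝ :=
  ∏ u : Fin τ,
    if hu : tp ≤ u.val ∧ u.val ≤ k.val then
      (if M.A u ω = d u (restrictSb (Nat.succ_le_succ hu.2) sb) (M.Hproc u ω) then 1 else 0)
    else 1

/-- Density-ratio weight `∏_{u} g'_u(s_u ∣ H_u)/g'_u(A_u ∣ H_u)` over times `tp ≤ u ≤ k`. -/
noncomputable def weight (M : Model 𝓐 𝓛 Ω) (g' : ∀ t : Fin τ, 𝓐 t → Hist 𝓐 𝓛 t → ℝ)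
    (tp : ℕ) (k : Fin τ) (sb : SbarN 𝓐 (k.val + 1)) (ω : Ω) : ℝ :=
  ∏ u : Fin τ,
    if hu : tp ≤ u.val ∧ u.val ≤ k.val then
      g' u (sb ⟨u, Nat.lt_succ_of_le hu.2⟩) (M.Hproc u ω) / g' u (M.A u ω) (M.Hproc u ω)
    else 1

/-- The pseudo-outcome `φ_{t+1}(s̄_t, Z; η')`; here `tp` is the paper's `t` (so times are
0-based internally: the paper's time `u` is the index `u - 1`). -/
noncomputable def phi (M : Model 𝓐 𝓛 Ω) (d : Policy 𝓐 𝓛)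
    (g' : ∀ t : Fin τ, 𝓐 t → Hist 𝓐 𝓛 t → ℝ)
    (m' : ∀ t : Fin τ, SbarN 𝓐 (t.val + 1) → 𝓐 t → Hist 𝓐 𝓛 t → ℝ)
    (tp : ℕ) (sb : SbarN 𝓐 tp) (ω : Ω) : ℝ :=
  (∑ k : Fin τ,
    if tp ≤ k.val then
      ∑ e : Ext 𝓐 tp k,
        Dind M d tp k (mergeExt sb e) ω * weight M g' tp k (mergeExt sb e) ω *
          (M.qNext (qOf d m') k (mergeExt sb e) ω -
            m' k (mergeExt sb e) (M.A k ω) (M.Hproc k ω))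
    else 0) +
  (if h : tp < τ then
      qOf d m' ⟨tp, h⟩ sb (M.A ⟨tp, h⟩ ω) (M.Hproc ⟨tp, h⟩ ω)
    else M.Y ω)

/-- The remainder `Rem_t(s̄_t, a_t, h_t; η')` of Theorem 2, as a function of the conditioning
event `S` (`S = {A_t = a_t, H_t = h_t}`, or `S = univ` for `t = 0`). -/
noncomputable def rem (M : Model 𝓐 𝓛 Ω) (d : Policy 𝓐 𝓛)
    (g' : ∀ t : Fin τ, 𝓐 t → Hist 𝓐 𝓛 t → ℝ)
    (m' mtrue : ∀ t : Fin τ, SbarN 𝓐 (t.val + 1) → 𝓐 t → Hist 𝓐 𝓛 t → ℝ)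
    (tp : ℕ) (sb : SbarN 𝓐 tp) (S : Set Ω) : ℝ :=
  ∑ k : Fin τ,
    if tp ≤ k.val then
      ∑ e : Ext 𝓐 tp k,
        condExpOn M.μ S (fun ω =>
          Dind M d tp k (mergeExt sb e) ω *
          (∏ r : Fin τ,
            if hr : tp ≤ r.val ∧ r.val < k.val then
              g' r (mergeExt sb e ⟨r, Nat.lt_succ_of_lt hr.2⟩) (M.Hproc r ω) /
                g' r (M.A r ω) (M.Hproc r ω)
            else 1) *
          (M.g k (mergeExt sb e ⟨k, Nat.lt_succ_self _⟩) (M.Hproc k ω) /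
              M.g k (M.A k ω) (M.Hproc k ω) -
            g' k (mergeExt sb e ⟨k, Nat.lt_succ_self _⟩) (M.Hproc k ω) /
              g' k (M.A k ω) (M.Hproc k ω)) *
          (m' k (mergeExt sb e) (M.A k ω) (M.Hproc k ω) -
            mtrue k (mergeExt sb e) (M.A k ω) (M.Hproc k ω)))
    else 0

section Aux

variable [∀ t, Fintype (𝓛 t)]

/-- The event `{H_t = h}` is measurable. -/
lemma measurableSet_histEvent (M : Model 𝓐 𝓛 Ω) (hmeas : M.Meas) (t : Fin τ)
    (h : Hist 𝓐 𝓛 t) : MeasurableSet {ω | M.Hproc t ω = h} := by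
  have hrw : {ω | M.Hproc t ω = h} =
      (⋂ s : {s : Fin τ // s ≤ t}, {ω : Ω | M.L s.1 ω = h.1 s}) ∩
      (⋂ s : {s : Fin τ // s < t}, {ω : Ω | M.A s.1 ω = h.2 s}) := by
    ext ω
    simp only [Set.mem_setOf_eq, Set.mem_inter_iff, Set.mem_iInter, Model.Hproc,
      Prod.ext_iff, funext_iff]
  rw [hrw]
  exact (MeasurableSet.iInter fun (s : {s : Fin τ // s ≤ t}) => hmeas.2.1 s.1 _).inter
    (MeasurableSet.iInter fun (s : {s : Fin τ // s < t}) => hmeas.1 s.1 _)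

/-- `g_t(a∣h) > 0` under positivity. -/
lemma g_pos (M : Model 𝓐 𝓛 Ω) [IsProbabilityMeasure M.μ] (hpos : M.Positivity)
    (t : Fin τ) (a : 𝓐 t) (h : Hist 𝓐 𝓛 t) : 0 < M.g t a h := by
  have h1 : 0 < M.μ (M.condEvent t a h) := hpos t a h
  have h2 : 0 < M.μ (M.histEvent t h) :=
    lt_of_lt_of_le h1 (measure_mono Set.inter_subset_right)
  exact div_pos (ENNReal.toReal_pos h1.ne' (measure_ne_top _ _))
    (ENNReal.toReal_pos h2.ne' (measure_ne_top _ _))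

/-- Expanding a set integral of a function of `(A_k, H_k)` over the finitely many values. -/
lemma setIntegral_fun_AH (M : Model 𝓐 𝓛 Ω) [IsProbabilityMeasure M.μ] (hmeas : M.Meas)
    (k : Fin τ) (f : 𝓐 k → Hist 𝓐 𝓛 k → ℝ) (S : Set Ω) :
    ∫ ω in S, f (M.A k ω) (M.Hproc k ω) ∂M.μ =
      ∑ a' : 𝓐 k, ∑ h' : Hist 𝓐 𝓛 k, f a' h' *
        (M.μ (S ∩ ({ω | M.A k ω = a'} ∩ {ω | M.Hproc k ω = h'}))).toReal := by
  classical
  have hE : ∀ (a' : 𝓐 k) (h' : Hist 𝓐 𝓛 k),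
      MeasurableSet ({ω | M.A k ω = a'} ∩ {ω | M.Hproc k ω = h'}) :=
    fun a' h' => (hmeas.1 k a').inter (measurableSet_histEvent M hmeas k h')
  have hpt : ∀ ω, f (M.A k ω) (M.Hproc k ω) =
      ∑ a' : 𝓐 k, ∑ h' : Hist 𝓐 𝓛 k,
        ({ω | M.A k ω = a'} ∩ {ω | M.Hproc k ω = h'}).indicator
          (fun _ => f a' h') ω := by
    intro ω
    simp only [Set.indicator_apply, Set.mem_inter_iff, Set.mem_setOf_eq]
    rw [Finset.sum_eq_single (M.A k ω)]
    · rw [Finset.sum_eq_single (M.Hproc k ω)]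
      · simp
      · intro h' _ hne; simp [Ne.symm hne]
      · intro hmem; exact absurd (Finset.mem_univ _) hmem
    · intro a' _ hne
      apply Finset.sum_eq_zero
      intro h' _
      simp [Ne.symm hne]
    · intro hmem; exact absurd (Finset.mem_univ _) hmem
  simp_rw [hpt]
  rw [integral_finset_sum]
  · refine Finset.sum_congr rfl fun a' _ => ?_
    rw [integral_finset_sum]
    · refine Finset.sum_congr rfl fun h' _ => ?_
      rw [setIntegral_indicator (hE a' h'), setIntegral_const, smul_eq_mul, mul_comm]
      rfl
    · exact fun h' _ => (integrable_const _).indicator (hE a' h')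
  · exact fun a' _ => integrable_finset_sum _
      (fun h' _ => (integrable_const _).indicator (hE a' h'))

/-- Factorization of the measure of `S ∩ {A_k = a'} ∩ {H_k = h'}` through `g_k`. -/
lemma measure_factor (M : Model 𝓐 𝓛 Ω) [IsProbabilityMeasure M.μ] (hpos : M.Positivity)
    (k : Fin τ) (a' : 𝓐 k) (h' : Hist 𝓐 𝓛 k) (S : Set Ω)
    (hS : S ∩ {ω | M.Hproc k ω = h'} = {ω | M.Hproc k ω = h'} ∨
          S ∩ {ω | M.Hproc k ω = h'} = ∅) :
    (M.μ (S ∩ ({ω | M.A k ω = a'} ∩ {ω | M.Hproc k ω = h'}))).toReal =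
      M.g k a' h' * (M.μ (S ∩ {ω | M.Hproc k ω = h'})).toReal := by
  have hcomm : S ∩ ({ω | M.A k ω = a'} ∩ {ω | M.Hproc k ω = h'}) =
      (S ∩ {ω | M.Hproc k ω = h'}) ∩ {ω | M.A k ω = a'} := by
    ext ω; simp only [Set.mem_inter_iff, Set.mem_setOf_eq]; tauto
  have hhistpos : 0 < M.μ (M.histEvent k h') :=
    lt_of_lt_of_le (hpos k a' h') (measure_mono Set.inter_subset_right)
  rcases hS with hS | hS
  · rw [hcomm, hS]
    have heq : {ω | M.Hproc k ω = h'} ∩ {ω | M.A k ω = a'} = M.condEvent k a' h' :=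
      Set.inter_comm _ _
    rw [heq]
    show _ = M.g k a' h' * (M.μ (M.histEvent k h')).toReal
    unfold Model.g
    rw [div_mul_cancel₀]
    exact (ENNReal.toReal_pos hhistpos.ne' (measure_ne_top _ _)).ne'
  · rw [hcomm, hS, Set.empty_inter]
    simp

/-- The per-history algebraic identity. -/
lemma alg_sum {α : Type} [Fintype α] [DecidableEq α] (gk : α → ℝ) (hg : ∀ a, gk a ≠ 0)
    (dk : α → α) (mm : α → α → ℝ) :
    ∑ a' : α, (mm a' (dk a')) * gk a' =
    ∑ a' : α, (∑ s : α, (if a' = dk s then (1 : ℝ) else 0) * (gk s / gk a') * mm s a')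
      * gk a' := by
  have h1 : ∀ a' : α,
      (∑ s : α, (if a' = dk s then (1 : ℝ) else 0) * (gk s / gk a') * mm s a') * gk a' =
      ∑ s : α, (if a' = dk s then gk s * mm s a' else 0) := by
    intro a'
    rw [Finset.sum_mul]
    refine Finset.sum_congr rfl fun s _ => ?_
    split_ifs with hcond
    · rw [one_mul]
      field_simp [hg a']
    · ring
  simp only [h1]
  rw [Finset.sum_comm]
  refine Finset.sum_congr rfl fun s _ => ?_
  have : ∀ a' : α, (if a' = dk s then gk s * mm s a' else 0) =
      (if a' = dk s then gk s * mm s a' else 0) := fun _ => rfl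
  rw [Finset.sum_ite_eq' Finset.univ (dk s) (fun a' => gk s * mm s a')]
  simp [mul_comm]

/-- The core change-of-measure integral identity, for any conditioning set `S` whose
intersection with each history event is all of it or empty. -/
lemma change_of_measure_integral (M : Model 𝓐 𝓛 Ω) [IsProbabilityMeasure M.μ]
    (hmeas : M.Meas) (hpos : M.Positivity) (d : Policy 𝓐 𝓛) (k : Fin τ)
    (m₁ : SbarN 𝓐 (k.val + 1) → 𝓐 k → Hist 𝓐 𝓛 k → ℝ)
    (q₁ : SbarN 𝓐 k.val → 𝓐 k → Hist 𝓐 𝓛 k → ℝ)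
    (hq₁ : ∀ (sb : SbarN 𝓐 k.val) (a : 𝓐 k) (h : Hist 𝓐 𝓛 k),
      q₁ sb a h = m₁ (snoc sb a) (d k (snoc sb a) h) h)
    (sb : SbarN 𝓐 k.val) (S : Set Ω)
    (hS : ∀ h' : Hist 𝓐 𝓛 k,
      S ∩ {ω | M.Hproc k ω = h'} = {ω | M.Hproc k ω = h'} ∨
      S ∩ {ω | M.Hproc k ω = h'} = ∅) :
    ∫ ω in S, q₁ sb (M.A k ω) (M.Hproc k ω) ∂M.μ =
    ∫ ω in S, (∑ s : 𝓐 k,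
        (if M.A k ω = d k (snoc sb s) (M.Hproc k ω) then (1 : ℝ) else 0) *
        (M.g k s (M.Hproc k ω) / M.g k (M.A k ω) (M.Hproc k ω)) *
        m₁ (snoc sb s) (M.A k ω) (M.Hproc k ω)) ∂M.μ := by
  classical
  have hL := setIntegral_fun_AH M hmeas k (fun a' h' => q₁ sb a' h') S
  have hR := setIntegral_fun_AH M hmeas k (fun a' h' => ∑ s : 𝓐 k,
        (if a' = d k (snoc sb s) h' then (1 : ℝ) else 0) *
        (M.g k s h' / M.g k a' h') * m₁ (snoc sb s) a' h') S
  rw [hL, hR]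
  simp_rw [mul_assoc, measure_factor M hpos k _ _ S (hS _), ← mul_assoc]
  rw [Finset.sum_comm]
  conv_rhs => rw [Finset.sum_comm]
  refine Finset.sum_congr rfl fun h' _ => ?_
  rw [← Finset.sum_mul, ← Finset.sum_mul]
  congr 1
  have := alg_sum (fun a' => M.g k a' h')
    (fun a' => (g_pos M hpos k a' h').ne')
    (fun s => d k (snoc sb s) h')
    (fun s a' => m₁ (snoc sb s) a' h')
  simpa [hq₁] using this

end Aux

/-- **Change-of-measure identity for one step of the sequential regression**
(Proposition in Supplementary Materials §3).  Fix a paper-time `k ∈ {1, …, τ}` (internally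
the 0-based index `k`); let `m₁` be any function and
`q₁(s̄_{k-1}, a_k, h_k) = m₁((s̄_{k-1}, a_k), d_k((s̄_{k-1}, a_k), h_k), h_k)`.  Then for every
`s̄_{k-1}` and every `(a, h)` at time `k-1`:
`E[q₁(s̄_{k-1}, A_k, H_k) ∣ A_{k-1} = a, H_{k-1} = h]
  = E[Σ_{s_k} 1{A_k = d_k((s̄_{k-1}, s_k), H_k)} (g_k(s_k∣H_k)/g_k(A_k∣H_k)) m₁((s̄_{k-1}, s_k), A_k, H_k) ∣ A_{k-1} = a, H_{k-1} = h]`,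
where for paper `k = 1` (index `k.val = 0`) the conditioning is omitted. -/
theorem change_of_measure_one_step
    [∀ t, Nonempty (𝓐 t)] [∀ t, Fintype (𝓛 t)] [∀ t, Nonempty (𝓛 t)]
    (M : Model 𝓐 𝓛 Ω) [IsProbabilityMeasure M.μ]
    (hmeas : M.Meas) (hpos : M.Positivity)
    (d : Policy 𝓐 𝓛)
    (k : Fin τ)
    (m₁ : SbarN 𝓐 (k.val + 1) → 𝓐 k → Hist 𝓐 𝓛 k → ℝ)
    (q₁ : SbarN 𝓐 k.val → 𝓐 k → Hist 𝓐 𝓛 k → ℝ)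
    (hq₁ : ∀ (sb : SbarN 𝓐 k.val) (a : 𝓐 k) (h : Hist 𝓐 𝓛 k),
      q₁ sb a h = m₁ (snoc sb a) (d k (snoc sb a) h) h)
    (sb : SbarN 𝓐 k.val) :
    -- paper k ≥ 2: conditioning on the previous time j (with j.val + 1 = k.val)
    (∀ (j : Fin τ), j.val + 1 = k.val → ∀ (a : 𝓐 j) (h : Hist 𝓐 𝓛 j),
      condExpOn M.μ (M.condEvent j a h) (fun ω => q₁ sb (M.A k ω) (M.Hproc k ω)) =
      condExpOn M.μ (M.condEvent j a h) (fun ω =>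
        ∑ s : 𝓐 k,
          (if M.A k ω = d k (snoc sb s) (M.Hproc k ω) then (1 : ℝ) else 0) *
          (M.g k s (M.Hproc k ω) / M.g k (M.A k ω) (M.Hproc k ω)) *
          m₁ (snoc sb s) (M.A k ω) (M.Hproc k ω))) ∧
    -- paper k = 1: both sides are unconditional expectations
    (k.val = 0 →
      (∫ ω, q₁ sb (M.A k ω) (M.Hproc k ω) ∂M.μ) =
      ∫ ω, (∑ s : 𝓐 k,
          (if M.A k ω = d k (snoc sb s) (M.Hproc k ω) then (1 : ℝ) else 0) *
          (M.g k s (M.Hproc k ω) / M.g k (M.A k ω) (M.Hproc k ω)) *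
          m₁ (snoc sb s) (M.A k ω) (M.Hproc k ω)) ∂M.μ) := by
  classical
  constructor
  · intro j hj a h
    have hjk : j < k := by
      rw [Fin.lt_def]; omega
    have hS : ∀ h' : Hist 𝓐 𝓛 k,
        M.condEvent j a h ∩ {ω | M.Hproc k ω = h'} = {ω | M.Hproc k ω = h'} ∨
        M.condEvent j a h ∩ {ω | M.Hproc k ω = h'} = ∅ := by
      intro h'
      set projA : 𝓐 j := h'.2 ⟨j, hjk⟩ with hprojA
      set projH : Hist 𝓐 𝓛 j :=
        (fun s => h'.1 ⟨s.1, le_trans s.2 hjk.le⟩,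
         fun s => h'.2 ⟨s.1, lt_trans s.2 hjk⟩) with hprojH
      have hkey : ∀ ω, M.Hproc k ω = h' → M.A j ω = projA ∧ M.Hproc j ω = projH := by
        intro ω hω
        subst hω
        exact ⟨rfl, rfl⟩
      rcases Classical.em (projA = a ∧ projH = h) with hP | hP
      · left
        apply Set.inter_eq_right.mpr
        intro ω hω
        obtain ⟨h1, h2⟩ := hkey ω hω
        exact ⟨show M.A j ω = a by rw [h1, hP.1],
          show M.Hproc j ω = h by rw [h2, hP.2]⟩
      · right
        rw [Set.eq_empty_iff_forall_notMem]
        rintro ω ⟨⟨hA, hH⟩, hω⟩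
        obtain ⟨h1, h2⟩ := hkey ω hω
        exact hP ⟨by rw [← h1]; exact hA, by rw [← h2]; exact hH⟩
    unfold condExpOn
    congr 1
    exact change_of_measure_integral M hmeas hpos d k m₁ q₁ hq₁ sb _ hS
  · intro _
    have hS : ∀ h' : Hist 𝓐 𝓛 k,
        (Set.univ : Set Ω) ∩ {ω | M.Hproc k ω = h'} = {ω | M.Hproc k ω = h'} ∨
        (Set.univ : Set Ω) ∩ {ω | M.Hproc k ω = h'} = ∅ :=
      fun h' => Or.inl (Set.univ_inter _)
    have := change_of_measure_integral M hmeas hpos d k m₁ q₁ hq₁ sb Set.univ hS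
    simpa [Measure.restrict_univ] using this

end GLMTP
end
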